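/- arXiv:2603.14024 — 9 statements merged into one kernel-verified Lean document; each statement's English description precedes it below -/
import Mathlib

section
/- Assume p ∈ [1, ∞), f(y,m) is increasing in m ∈ ℝ and increasing in y ∈ ℝ, and y ↦ U(f(y,m)) is concave for each m ∈ ℝ. Then the generalized shortfall risk measure ρ^{U,f,B} admits the dual representation: for every X ∈ L^p, ρ^{U,f,B}(X) = sup_{Q ∈ 𝒬} R(E_Q[−X], Q), where 𝒬 is the set of probability measures Q on (Ω, 𝓕) absolutely continuous with respect to P whose density dQ/dP lies in L^{p'} (p' the conjugate exponent), E_Q denotes expectation under Q, and R(x, Q) = inf{ m ∈ ℝ : sup_{Y ∈ 𝒜^m} E_Q[−Y] ≥ x } with infimum and supremum taken in the extended reals. -/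
/-!
`sup_Q R(E_Q[-X], Q) ≤ ρ(X)` is immediate: `X ∈ 𝒜^m` forces `E_Q[-X] ≤ sup_{Y ∈ 𝒜^m} E_Q[-Y]`.
Conversely, let `r < ρ(X)`, so that `E[φ(X)] < B` for the nondecreasing concave
`φ = U(f(·, r))`. The left derivative `g` of `φ` is a nonnegative antitone supergradient, so for a
truncation `Z = max X (-n)` with `E[φ(Z)] < B` the weight `g(Z)` is bounded and
`E[g(Z) (Y - X)] ≥ E[φ(Y)] - E[φ(Z)] ≥ B - E[φ(Z)] > 0` for every `Y ∈ 𝒜^r`. Normalised, `g(Z)`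
is the density of some `Q ∈ 𝒬` with `sup_{Y ∈ 𝒜^m} E_Q[-Y] < E_Q[-X]` for all `m ≤ r`, since
`𝒜^m ⊆ 𝒜^r`; hence `R(E_Q[-X], Q) ≥ r`.
-/

open MeasureTheory Real
open scoped ENNReal

/-- Acceptance set at level `m` of the generalized shortfall:
`𝒜^m = {Y ∈ L^p : E[U(f(Y,m))] ≥ B}`. -/
def genShortfallAccSet {Ω : Type*} [MeasurableSpace Ω] (P : Measure Ω) (p : ℝ≥0∞)
    (U : ℝ → ℝ) (f : ℝ → ℝ → ℝ) (B : ℝ) (m : ℝ) : Set (Ω → ℝ) :=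
  {Y | MemLp Y p P ∧ B ≤ ∫ ω, U (f (Y ω) m) ∂P}

/-- The generalized shortfall risk measure
`ρ^{U,f,B}(X) = inf {m ∈ ℝ : X ∈ 𝒜^m}`, infimum taken in the extended reals
(so `inf ∅ = +∞`). -/
noncomputable def genShortfall {Ω : Type*} [MeasurableSpace Ω] (P : Measure Ω) (p : ℝ≥0∞)
    (U : ℝ → ℝ) (f : ℝ → ℝ → ℝ) (B : ℝ) (X : Ω → ℝ) : EReal :=
  sInf ((fun m : ℝ => (m : EReal)) ''
    {m : ℝ | X ∈ genShortfallAccSet P p U f B m})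

open Set

namespace ConcaveOn

variable {φ : ℝ → ℝ}

lemma antitone_leftDeriv (hφ : ConcaveOn ℝ univ φ) :
    Antitone fun x => derivWithin φ (Iio x) x := by
  intro x y hxy
  have := hφ.neg.monotoneOn_leftDeriv (by simp) (by simp) hxy
  simpa only [derivWithin.neg, neg_le_neg_iff] using this

lemma slope_le_leftDeriv_of_lt (hφ : ConcaveOn ℝ univ φ) {x y : ℝ} (hxy : x < y) :
    slope φ x y ≤ derivWithin φ (Iio x) x := by
  have hright := (hφ.neg.hasDerivWithinAt_rightDeriv_of_mem_interior
    (x := x) (by simp)).differentiableWithinAt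
  have := (hφ.neg.leftDeriv_le_rightDeriv_of_mem_interior (x := x) (by simp)).trans
    (hφ.neg.rightDeriv_le_slope (mem_univ x) (mem_univ y) hxy hright)
  simpa only [derivWithin.neg, slope_neg_fun, Pi.neg_apply, neg_le_neg_iff] using this

lemma le_add_leftDeriv_mul_sub (hφ : ConcaveOn ℝ univ φ) (x z : ℝ) :
    φ z ≤ φ x + derivWithin φ (Iio x) x * (z - x) := by
  rcases lt_trichotomy z x with hzx | rfl | hxz
  · have hleft := (hφ.neg.hasDerivWithinAt_leftDeriv_of_mem_interior
      (x := x) (by simp)).differentiableWithinAt.neg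
    have := hφ.leftDeriv_le_slope (mem_univ z) (mem_univ x) hzx (by simpa using hleft)
    rw [slope_def_field, le_div_iff₀ (sub_pos.2 hzx)] at this
    linarith
  · simp
  · have := hφ.slope_le_leftDeriv_of_lt hxz
    rw [slope_def_field, div_le_iff₀ (sub_pos.2 hxz)] at this
    linarith

end ConcaveOn

namespace MeasureTheory.Measure

variable {Ω : Type*} [MeasurableSpace Ω] {P : Measure Ω}

noncomputable def withNormalizedDensity (P : Measure Ω) (w : Ω → ℝ) : Measure Ω :=
  P.withDensity fun ω => ENNReal.ofReal (w ω / ∫ ω', w ω' ∂P)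

lemma isProbabilityMeasure_withNormalizedDensity {w : Ω → ℝ} (hw : Integrable w P)
    (hw_nonneg : ∀ ω, 0 ≤ w ω) (hw_pos : 0 < ∫ ω, w ω ∂P) :
    IsProbabilityMeasure (P.withNormalizedDensity w) := by
  constructor
  rw [withNormalizedDensity, withDensity_apply _ MeasurableSet.univ, setLIntegral_univ,
    ← ofReal_integral_eq_lintegral_ofReal (hw.div_const _)
      (ae_of_all _ fun ω => div_nonneg (hw_nonneg ω) hw_pos.le),
    integral_div, div_self hw_pos.ne', ENNReal.ofReal_one]

lemma integral_withNormalizedDensity {w : Ω → ℝ} (hw : Measurable w)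
    (hw_nonneg : ∀ ω, 0 ≤ w ω) (h : Ω → ℝ) :
    ∫ ω, h ω ∂(P.withNormalizedDensity w) = (∫ ω, w ω * h ω ∂P) / ∫ ω, w ω ∂P := by
  have hc : 0 ≤ ∫ ω, w ω ∂P := integral_nonneg hw_nonneg
  rw [withNormalizedDensity, integral_withDensity_eq_integral_toReal_smul
    (hw.div_const _).ennreal_ofReal (ae_of_all _ fun _ => ENNReal.ofReal_lt_top), ← integral_div]
  refine integral_congr_ae (ae_of_all _ fun ω => ?_)
  simp only [ENNReal.toReal_ofReal (div_nonneg (hw_nonneg ω) hc), smul_eq_mul, div_mul_eq_mul_div]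

lemma memLp_rnDeriv_withNormalizedDensity [IsFiniteMeasure P] {w : Ω → ℝ} {M : ℝ}
    (hw : Measurable w) (hw_bdd : ∀ ω, w ω ∈ Icc 0 M) (p : ℝ≥0∞) :
    MemLp (fun ω => ((P.withNormalizedDensity w).rnDeriv P ω).toReal) p P := by
  have hc : 0 ≤ ∫ ω, w ω ∂P := integral_nonneg fun ω => (hw_bdd ω).1
  refine MemLp.of_bound (measurable_rnDeriv _ _).ennreal_toReal.aestronglyMeasurable
    (M / ∫ ω, w ω ∂P) ?_
  filter_upwards [rnDeriv_withDensity P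
    (hw.div_const (∫ ω, w ω ∂P)).ennreal_ofReal] with ω hω
  rw [withNormalizedDensity, hω, ENNReal.toReal_ofReal (div_nonneg (hw_bdd ω).1 hc),
    Real.norm_eq_abs, abs_of_nonneg (div_nonneg (hw_bdd ω).1 hc)]
  exact div_le_div_of_nonneg_right (hw_bdd ω).2 hc

end MeasureTheory.Measure

section Separation

variable {Ω : Type*} [MeasurableSpace Ω] {P : Measure Ω}

def probMeasuresDensityMemLp (P : Measure Ω) (p' : ℝ≥0∞) : Set (Measure Ω) :=
  {Q | IsProbabilityMeasure Q ∧ Q ≪ P ∧ MemLp (fun ω => (Q.rnDeriv P ω).toReal) p' P}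

lemma self_mem_probMeasuresDensityMemLp [IsProbabilityMeasure P] (p' : ℝ≥0∞) :
    P ∈ probMeasuresDensityMemLp P p' := by
  refine ⟨inferInstance, .rfl, (memLp_const 1).ae_eq ?_⟩
  filter_upwards [Measure.rnDeriv_self P] with ω hω
  simp [hω]

lemma exists_mem_probMeasuresDensityMemLp_integral_neg_le [IsProbabilityMeasure P]
    (p' : ℝ≥0∞) {w X : Ω → ℝ} {M δ : ℝ} {S : Set (Ω → ℝ)} (hw : Measurable w)
    (hw_bdd : ∀ ω, w ω ∈ Icc 0 M) (hδ : 0 < δ)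
    (hsep : ∀ Y ∈ S, ∫ ω, w ω * X ω ∂P + δ ≤ ∫ ω, w ω * Y ω ∂P) :
    ∃ Q ∈ probMeasuresDensityMemLp P p', ∃ ε > 0,
      ∀ Y ∈ S, ∫ ω, -Y ω ∂Q ≤ ∫ ω, -X ω ∂Q - ε := by
  have hw_nonneg : ∀ ω, 0 ≤ w ω := fun ω => (hw_bdd ω).1
  have hw_int : Integrable w P :=
    .of_bound hw.aestronglyMeasurable M (ae_of_all _ fun ω => by
      rw [Real.norm_eq_abs, abs_of_nonneg (hw_nonneg ω)]; exact (hw_bdd ω).2)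
  have hc : 0 ≤ ∫ ω, w ω ∂P := integral_nonneg hw_nonneg
  rcases hc.eq_or_lt with hc | hc
  · -- `w = 0` a.e., so no `Y` can satisfy `hsep`
    have hw_zero : w =ᵐ[P] 0 := (integral_eq_zero_iff_of_nonneg hw_nonneg hw_int).1 hc.symm
    have h_zero : ∀ Z : Ω → ℝ, ∫ ω, w ω * Z ω ∂P = 0 := fun Z =>
      integral_eq_zero_of_ae (hw_zero.mono fun ω hω => by simp [hω])
    refine ⟨P, self_mem_probMeasuresDensityMemLp p', 1, one_pos, fun Y hY => ?_⟩
    have := hsep Y hY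
    rw [h_zero, h_zero] at this
    linarith
  · have := Measure.isProbabilityMeasure_withNormalizedDensity hw_int hw_nonneg hc
    refine ⟨P.withNormalizedDensity w,
      ⟨inferInstance, withDensity_absolutelyContinuous _ _,
        Measure.memLp_rnDeriv_withNormalizedDensity hw hw_bdd p'⟩,
      δ / ∫ ω, w ω ∂P, div_pos hδ hc, fun Y hY => ?_⟩
    simp only [Measure.integral_withNormalizedDensity hw hw_nonneg, mul_neg, integral_neg]
    rw [← sub_div, div_le_div_iff_of_pos_right hc]
    linarith [hsep Y hY]

variable {φ : ℝ → ℝ}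

lemma exists_integral_comp_max_lt {X : Ω → ℝ} {B : ℝ} (hφ : Monotone φ)
    (hint : ∀ n : ℕ, Integrable (fun ω => φ (max (X ω) (-n))) P)
    (hint_X : Integrable (fun ω => φ (X ω)) P) (hXB : ∫ ω, φ (X ω) ∂P < B) :
    ∃ n : ℕ, ∫ ω, φ (max (X ω) (-n)) ∂P < B := by
  have hanti : ∀ ω, Antitone fun n : ℕ => φ (max (X ω) (-n)) := fun ω m n hmn =>
    hφ (max_le_max le_rfl (neg_le_neg (Nat.cast_le.2 hmn)))
  have hlim : ∀ ω, Filter.Tendsto (fun n : ℕ => φ (max (X ω) (-n))) Filter.atTop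
      (nhds (φ (X ω))) := fun ω => by
    refine tendsto_const_nhds.congr' ?_
    obtain ⟨N, hN⟩ := exists_nat_ge (-X ω)
    filter_upwards [Filter.eventually_ge_atTop N] with n hn
    rw [max_eq_left (by linarith [(Nat.cast_le (α := ℝ)).2 hn])]
  exact ((integral_tendsto_of_tendsto_of_antitone hint hint_X (ae_of_all _ hanti)
    (ae_of_all _ hlim)).eventually_lt_const hXB).exists

lemma integral_comp_le_add_integral_leftDeriv_mul (hφ : ConcaveOn ℝ univ φ) {Y Z : Ω → ℝ}
    {M : ℝ} (hY : Integrable Y P) (hZ : Integrable Z P)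
    (hφY : Integrable (fun ω => φ (Y ω)) P) (hφZ : Integrable (fun ω => φ (Z ω)) P)
    (hg : AEStronglyMeasurable (fun ω => derivWithin φ (Iio (Z ω)) (Z ω)) P)
    (hg_bdd : ∀ᵐ ω ∂P, ‖derivWithin φ (Iio (Z ω)) (Z ω)‖ ≤ M) :
    ∫ ω, φ (Y ω) ∂P ≤
      ∫ ω, φ (Z ω) ∂P + ∫ ω, derivWithin φ (Iio (Z ω)) (Z ω) * (Y ω - Z ω) ∂P := by
  have hint : Integrable (fun ω => derivWithin φ (Iio (Z ω)) (Z ω) * (Y ω - Z ω)) P :=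
    (hY.sub hZ).bdd_mul hg hg_bdd
  rw [← integral_add hφZ hint]
  exact integral_mono hφY (hφZ.add hint) fun ω => hφ.le_add_leftDeriv_mul_sub (Z ω) (Y ω)

/-- The weight is the left derivative of `φ` at a truncation `max X (-n)` of `X`: truncating
keeps `E[φ(·)] < B` for large `n` and makes the weight bounded, by antitonicity. -/
lemma exists_bounded_weight_separating [IsFiniteMeasure P] {p : ℝ≥0∞} (hp : 1 ≤ p)
    (hφ_mono : Monotone φ) (hφ : ConcaveOn ℝ univ φ)
    (hint : ∀ Y : Ω → ℝ, MemLp Y p P → Integrable (fun ω => φ (Y ω)) P)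
    {X : Ω → ℝ} (hX : MemLp X p P) {B : ℝ} (hXB : ∫ ω, φ (X ω) ∂P < B) :
    ∃ w : Ω → ℝ, Measurable w ∧ ∃ M δ : ℝ, (∀ ω, w ω ∈ Icc 0 M) ∧ 0 < δ ∧
      ∀ Y : Ω → ℝ, MemLp Y p P → B ≤ ∫ ω, φ (Y ω) ∂P →
        ∫ ω, w ω * X ω ∂P + δ ≤ ∫ ω, w ω * Y ω ∂P := by
  obtain ⟨n, hn⟩ := exists_integral_comp_max_lt hφ_mono
    (fun n => hint _ (hX.sup (memLp_const _))) (hint X hX) hXB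
  set g : ℝ → ℝ := fun x => derivWithin φ (Iio x) x
  set Z : Ω → ℝ := fun ω => max (hX.1.mk X ω) (-n)
  have hZ : MemLp Z p P := (hX.ae_eq hX.1.ae_eq_mk).sup (memLp_const _)
  have hw : Measurable fun ω => g (Z ω) :=
    hφ.antitone_leftDeriv.measurable.comp
      (hX.1.stronglyMeasurable_mk.measurable.max measurable_const)
  have hw_bdd : ∀ ω, g (Z ω) ∈ Icc 0 (g (-n)) := fun ω =>
    ⟨(hφ_mono.monotoneOn _).derivWithin_nonneg, hφ.antitone_leftDeriv (le_max_right _ _)⟩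
  have hφZ : ∫ ω, φ (Z ω) ∂P = ∫ ω, φ (max (X ω) (-n)) ∂P :=
    integral_congr_ae (hX.1.ae_eq_mk.mono fun ω hω => by simp only [Z, hω])
  refine ⟨fun ω => g (Z ω), hw, g (-n), B - ∫ ω, φ (Z ω) ∂P, hw_bdd, by linarith,
    fun Y hY hBY => ?_⟩
  have hw_norm : ∀ᵐ ω ∂P, ‖g (Z ω)‖ ≤ g (-n) := ae_of_all _ fun ω => by
    rw [Real.norm_eq_abs, abs_of_nonneg (hw_bdd ω).1]; exact (hw_bdd ω).2
  have hint_mul : ∀ V : Ω → ℝ, MemLp V p P → Integrable (fun ω => g (Z ω) * V ω) P :=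
    fun V hV => (hV.integrable hp).bdd_mul hw.aestronglyMeasurable hw_norm
  have hsuper := integral_comp_le_add_integral_leftDeriv_mul hφ (hY.integrable hp)
    (hZ.integrable hp) (hint Y hY) (hint Z hZ) hw.aestronglyMeasurable hw_norm
  simp only [mul_sub] at hsuper
  rw [integral_sub (hint_mul Y hY) (hint_mul Z hZ)] at hsuper
  have hXZ : ∫ ω, g (Z ω) * X ω ∂P ≤ ∫ ω, g (Z ω) * Z ω ∂P :=
    integral_mono_ae (hint_mul X hX) (hint_mul Z hZ) (hX.1.ae_eq_mk.mono fun ω hω => by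
      show g (Z ω) * X ω ≤ g (Z ω) * Z ω
      rw [hω]
      exact mul_le_mul_of_nonneg_left (le_max_left _ _) (hw_bdd ω).1)
  linarith

end Separation

section GenShortfall

variable {Ω : Type*} [MeasurableSpace Ω] {P : Measure Ω} {p : ℝ≥0∞} {U : ℝ → ℝ}
  {f : ℝ → ℝ → ℝ} {B : ℝ}

/-- The function `R(x, Q)` of the dual representation. -/
noncomputable def genShortfallDual (P : Measure Ω) (p : ℝ≥0∞) (U : ℝ → ℝ) (f : ℝ → ℝ → ℝ)
    (B : ℝ) (Q : Measure Ω) (x : ℝ) : EReal :=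
  sInf ((fun m : ℝ => (m : EReal)) ''
    {m : ℝ | (x : EReal) ≤
      ⨆ Y ∈ genShortfallAccSet P p U f B m, ((∫ ω, -Y ω ∂Q : ℝ) : EReal)})

lemma genShortfallAccSet_monotone (hU : Monotone U) (hf : ∀ y, Monotone (f y))
    (hint : ∀ Y : Ω → ℝ, MemLp Y p P → ∀ m : ℝ, Integrable (fun ω => U (f (Y ω) m)) P) :
    Monotone (genShortfallAccSet P p U f B) := fun _ _ hmm' Y hY =>
  ⟨hY.1, hY.2.trans (integral_mono (hint Y hY.1 _) (hint Y hY.1 _) fun _ => hU (hf _ hmm'))⟩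

lemma genShortfallDual_le_genShortfall (Q : Measure Ω) (X : Ω → ℝ) :
    genShortfallDual P p U f B Q (∫ ω, -X ω ∂Q) ≤ genShortfall P p U f B X :=
  sInf_le_sInf <| image_mono fun _ hm =>
    le_biSup (fun Y : Ω → ℝ => ((∫ ω, -Y ω ∂Q : ℝ) : EReal)) hm

lemma le_genShortfallDual_of_forall_le_sub (hA : Monotone (genShortfallAccSet P p U f B))
    {Q : Measure Ω} {x r ε : ℝ} (hε : 0 < ε)
    (hsep : ∀ Y ∈ genShortfallAccSet P p U f B r, ∫ ω, -Y ω ∂Q ≤ x - ε) :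
    (r : EReal) ≤ genShortfallDual P p U f B Q x := by
  refine le_sInf ?_
  rintro _ ⟨m, hm, rfl⟩
  by_contra! hmr
  have hsup : (⨆ Y ∈ genShortfallAccSet P p U f B m, ((∫ ω, -Y ω ∂Q : ℝ) : EReal)) ≤
      ((x - ε : ℝ) : EReal) :=
    iSup₂_le fun Y hY => EReal.coe_le_coe_iff.2 (hsep Y (hA (EReal.coe_lt_coe_iff.1 hmr).le hY))
  linarith [EReal.coe_le_coe_iff.1 (hm.trans hsup)]

end GenShortfall

theorem genShortfall_dual_representation_general
    {Ω : Type*} [MeasurableSpace Ω] (P : Measure Ω) [IsProbabilityMeasure P]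
    (p p' : ℝ≥0∞) (hp : 1 ≤ p)
    (U : ℝ → ℝ) (hU_mono : Monotone U) (B : ℝ)
    (f : ℝ → ℝ → ℝ)
    (hf_m : ∀ y : ℝ, StrictMono (fun m => f y m))
    (hf_y : ∀ m : ℝ, StrictMono (fun y => f y m))
    (hUf_conc : ∀ m : ℝ, ConcaveOn ℝ Set.univ (fun y => U (f y m)))
    (hint : ∀ Y : Ω → ℝ, MemLp Y p P → ∀ m : ℝ,
      Integrable (fun ω => U (f (Y ω) m)) P)
    (X : Ω → ℝ) (hX : MemLp X p P) :
    genShortfall P p U f B X =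
      ⨆ Q ∈ {Q : Measure Ω | IsProbabilityMeasure Q ∧ Q ≪ P ∧
        MemLp (fun ω => (Q.rnDeriv P ω).toReal) p' P},
        sInf ((fun m : ℝ => (m : EReal)) ''
          {m : ℝ | ((∫ ω, -X ω ∂Q : ℝ) : EReal) ≤
            ⨆ Y ∈ genShortfallAccSet P p U f B m, ((∫ ω, -Y ω ∂Q : ℝ) : EReal)}) := by
  change _ = ⨆ Q ∈ probMeasuresDensityMemLp P p', genShortfallDual P p U f B Q (∫ ω, -X ω ∂Q)
  refine le_antisymm (EReal.ge_of_forall_gt_iff_ge.1 fun r hr => ?_)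
    (iSup₂_le fun Q _ => genShortfallDual_le_genShortfall Q X)
  have hXr : ∫ ω, U (f (X ω) r) ∂P < B := lt_of_not_ge fun hB =>
    (sInf_le ⟨r, ⟨hX, hB⟩, rfl⟩ : genShortfall P p U f B X ≤ r).not_gt hr
  obtain ⟨w, hw, M, δ, hw_bdd, hδ, hsep⟩ := exists_bounded_weight_separating hp
    (fun _ _ hab => hU_mono ((hf_y r).monotone hab)) (hUf_conc r) (fun Y hY => hint Y hY r)
    hX hXr
  obtain ⟨Q, hQ, ε, hε, hQsep⟩ := exists_mem_probMeasuresDensityMemLp_integral_neg_le p' hw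
    hw_bdd hδ (S := genShortfallAccSet P p U f B r) fun Y hY => hsep Y hY.1 hY.2
  have hA := genShortfallAccSet_monotone (f := f) (B := B) hU_mono
    (fun y => (hf_m y).monotone) hint
  exact (le_genShortfallDual_of_forall_le_sub hA hε hQsep).trans
    (le_biSup (fun Q => genShortfallDual P p U f B Q (∫ ω, -X ω ∂Q)) hQ)

/-- Dual representation of the generalized shortfall risk measure:
`ρ^{U,f,B}(X) = sup_{Q ∈ 𝒬} R(E_Q[-X], Q)` where
`R(x,Q) = inf{m : sup_{Y ∈ 𝒜^m} E_Q[-Y] ≥ x}` and `𝒬` is the set of probability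
measures `Q ≪ P` with density in `L^{p'}`. -/
theorem genShortfall_dual_representation
    {Ω : Type*} [MeasurableSpace Ω] (P : Measure Ω) [IsProbabilityMeasure P]
    (p p' : ℝ≥0∞) (hp : 1 ≤ p) (hp_ne : p ≠ ⊤) (hconj : 1 / p + 1 / p' = 1)
    (U : ℝ → ℝ) (hU_mono : Monotone U) (hU_conc : ConcaveOn ℝ Set.univ U)
    (hU_nc : ∃ x y : ℝ, U x ≠ U y) (B : ℝ)
    (f : ℝ → ℝ → ℝ)
    (hf_m : ∀ y : ℝ, StrictMono (fun m => f y m))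
    (hf_y : ∀ m : ℝ, StrictMono (fun y => f y m))
    (hUf_conc : ∀ m : ℝ, ConcaveOn ℝ Set.univ (fun y => U (f y m)))
    (hint : ∀ Y : Ω → ℝ, MemLp Y p P → ∀ m : ℝ,
      Integrable (fun ω => U (f (Y ω) m)) P)
    (X : Ω → ℝ) (hX : MemLp X p P) :
    genShortfall P p U f B X =
      ⨆ Q ∈ {Q : Measure Ω | IsProbabilityMeasure Q ∧ Q ≪ P ∧
        MemLp (fun ω => (Q.rnDeriv P ω).toReal) p' P},
        sInf ((fun m : ℝ => (m : EReal)) ''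
          {m : ℝ | ((∫ ω, -X ω ∂Q : ℝ) : EReal) ≤
            ⨆ Y ∈ genShortfallAccSet P p U f B m, ((∫ ω, -Y ω ∂Q : ℝ) : EReal)}) :=
  genShortfall_dual_representation_general P p p' hp U hU_mono B f hf_m hf_y hUf_conc hint X hX
end

section
/- Assume p ∈ [1, ∞), f(y,m) is increasing in m ∈ ℝ and increasing in y ∈ ℝ, and y ↦ U(f(y,m)) is concave (real-valued, hence continuous) for each m ∈ ℝ. Then the generalized shortfall risk measure ρ^{U,f,B} : L^p → ℝ ∪ {±∞} is lower semicontinuous with respect to the L^p-norm topology: for every sequence X_n → X in L^p, ρ^{U,f,B}(X) ≤ liminf_n ρ^{U,f,B}(X_n). -/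
open MeasureTheory Real
open scoped ENNReal

/-!
If `ρ(X_n) < z` along a subsequence, then these `X_n` lie in the acceptance set `𝒜^z`, since
`𝒜^m` grows with `m`. That set is sequentially closed in `L^p`: for the concave
`g = U(f(·, z))` pick an affine majorant `a + b y`; along an a.e. convergent subsequence,
Fatou's lemma applied to `a + b Y_n - g(Y_n) ≥ 0`, together with `E[Y_n] → E[Y]`, gives
`E[g(Y)] ≥ limsup E[g(Y_n)] ≥ B`. Hence `ρ(X) ≤ z`.
-/

open Filter Set Topology

namespace ConcaveOn

theorem exists_le_affine {g : ℝ → ℝ} (hg : ConcaveOn ℝ univ g) :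
    ∃ a b : ℝ, ∀ y, g y ≤ a + b * y := by
  obtain ⟨c, c', hc⟩ := hg.neg.exists_affine_le_real isClosed_univ
    (hg.locallyLipschitz.continuous.neg.lowerSemicontinuous.lowerSemicontinuousOn univ)
  exact ⟨-c', -c, fun y => by linarith [hc y (mem_univ y), show (-g) y = -g y from rfl]⟩

end ConcaveOn

namespace MeasureTheory

variable {Ω : Type*} [MeasurableSpace Ω] {μ : Measure Ω}

theorem integral_le_of_tendsto_ae_of_integral_le {H : ℕ → Ω → ℝ} {h : Ω → ℝ} {c : ℕ → ℝ}
    {c₀ : ℝ}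
    (hH : ∀ n, Integrable (H n) μ) (hH_nonneg : ∀ n, 0 ≤ᵐ[μ] H n) (hh : Integrable h μ)
    (hlim : ∀ᵐ ω ∂μ, Tendsto (fun n => H n ω) atTop (𝓝 (h ω)))
    (hc : Tendsto c atTop (𝓝 c₀)) (hHc : ∀ n, ∫ ω, H n ω ∂μ ≤ c n) :
    ∫ ω, h ω ∂μ ≤ c₀ := by
  have hh_nonneg : 0 ≤ᵐ[μ] h := by
    filter_upwards [hlim, ae_all_iff.2 hH_nonneg] with ω hω hω_nonneg
    exact ge_of_tendsto' hω hω_nonneg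
  have hc₀ : 0 ≤ c₀ :=
    ge_of_tendsto' hc fun n => (integral_nonneg_of_ae (hH_nonneg n)).trans (hHc n)
  rw [← ENNReal.ofReal_le_ofReal_iff hc₀, ofReal_integral_eq_lintegral_ofReal hh hh_nonneg]
  calc ∫⁻ ω, ENNReal.ofReal (h ω) ∂μ
      = ∫⁻ ω, liminf (fun n => ENNReal.ofReal (H n ω)) atTop ∂μ := by
        refine lintegral_congr_ae ?_
        filter_upwards [hlim] with ω hω
        exact (ENNReal.tendsto_ofReal hω).liminf_eq.symm
    _ ≤ liminf (fun n => ∫⁻ ω, ENNReal.ofReal (H n ω) ∂μ) atTop :=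
        lintegral_liminf_le' fun n => (hH n).aemeasurable.ennreal_ofReal
    _ ≤ liminf (fun n => ENNReal.ofReal (c n)) atTop := by
        refine liminf_le_liminf (Eventually.of_forall fun n => ?_)
        rw [← ofReal_integral_eq_lintegral_ofReal (hH n) (hH_nonneg n)]
        exact ENNReal.ofReal_le_ofReal (hHc n)
    _ = ENNReal.ofReal c₀ := (ENNReal.tendsto_ofReal hc).liminf_eq

theorem tendsto_eLpNorm_one_of_tendsto_eLpNorm [IsFiniteMeasure μ] {E : Type*}
    [NormedAddCommGroup E] {ι : Type*} {l : Filter ι} {p : ℝ≥0∞} (hp : 1 ≤ p)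
    {F : ι → Ω → E} (hF : ∀ i, AEStronglyMeasurable (F i) μ)
    (hlim : Tendsto (fun i => eLpNorm (F i) p μ) l (𝓝 0)) :
    Tendsto (fun i => eLpNorm (F i) 1 μ) l (𝓝 0) := by
  have hexp : 0 ≤ 1 / (1 : ℝ≥0∞).toReal - 1 / p.toReal := by
    rcases eq_or_ne p ⊤ with rfl | hp_top
    · simp
    · simpa using inv_le_one_of_one_le₀ (ENNReal.toReal_mono hp_top hp)
  have hconst := ENNReal.rpow_ne_top_of_nonneg hexp (measure_ne_top μ univ)
  refine tendsto_of_tendsto_of_tendsto_of_le_of_le tendsto_const_nhds ?_ (fun i => zero_le)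
    fun i => eLpNorm_le_eLpNorm_mul_rpow_measure_univ hp (hF i)
  simpa using ENNReal.Tendsto.mul_const hlim (Or.inr hconst)


theorem _root_.ConcaveOn.le_integral_comp_of_tendsto_eLpNorm_one [IsFiniteMeasure μ]
    {g : ℝ → ℝ} (hg : ConcaveOn ℝ univ g) {Y : ℕ → Ω → ℝ} {Y₀ : Ω → ℝ}
    (hY : ∀ n, Integrable (Y n) μ) (hY₀ : Integrable Y₀ μ)
    (hgY : ∀ n, Integrable (fun ω => g (Y n ω)) μ) (hgY₀ : Integrable (fun ω => g (Y₀ ω)) μ)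
    (hlim : Tendsto (fun n => eLpNorm (Y n - Y₀) 1 μ) atTop (𝓝 0))
    {B : ℝ} (hB : ∀ n, B ≤ ∫ ω, g (Y n ω) ∂μ) :
    B ≤ ∫ ω, g (Y₀ ω) ∂μ := by
  obtain ⟨a, b, hab⟩ := hg.exists_le_affine
  obtain ⟨ns, hns, hae⟩ := (tendstoInMeasure_of_tendsto_eLpNorm one_ne_zero
    (fun n => (hY n).aestronglyMeasurable) hY₀.aestronglyMeasurable hlim).exists_seq_tendsto_ae
  have integrable_affine {Z : Ω → ℝ} (hZ : Integrable Z μ) :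
      Integrable (fun ω => a + b * Z ω) μ :=
    (integrable_const a).add (hZ.const_mul b)
  have integral_gap {Z : Ω → ℝ} (hZ : Integrable Z μ) (hgZ : Integrable (fun ω => g (Z ω)) μ) :
      ∫ ω, a + b * Z ω - g (Z ω) ∂μ = μ.real univ * a + b * ∫ ω, Z ω ∂μ - ∫ ω, g (Z ω) ∂μ := by
    rw [integral_sub (integrable_affine hZ) hgZ, integral_add (integrable_const a)
      (hZ.const_mul b), integral_const, integral_const_mul, smul_eq_mul]
  have hYint : Tendsto (fun i => ∫ ω, Y (ns i) ω ∂μ) atTop (𝓝 (∫ ω, Y₀ ω ∂μ)) :=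
    tendsto_integral_of_L1' Y₀ hY₀.aestronglyMeasurable
      (Eventually.of_forall fun i => hY (ns i)) (hlim.comp hns.tendsto_atTop)
  have fatou := integral_le_of_tendsto_ae_of_integral_le (μ := μ)
    (H := fun i ω => a + b * Y (ns i) ω - g (Y (ns i) ω))
    (h := fun ω => a + b * Y₀ ω - g (Y₀ ω))
    (c := fun i => μ.real univ * a + b * ∫ ω, Y (ns i) ω ∂μ - B)
    (fun i => (integrable_affine (hY (ns i))).sub (hgY (ns i)))
    (fun i => Eventually.of_forall fun ω => sub_nonneg.2 (hab _))
    ((integrable_affine hY₀).sub hgY₀)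
    (by
      filter_upwards [hae] with ω hω
      exact (tendsto_const_nhds.add (hω.const_mul b)).sub
        ((hg.locallyLipschitz.continuous.tendsto _).comp hω))
    (((hYint.const_mul b).const_add _).sub_const B)
    (fun i => by rw [integral_gap (hY (ns i)) (hgY (ns i))]; linarith [hB (ns i)])
  rw [integral_gap hY₀ hgY₀] at fatou
  linarith

end MeasureTheory

section GenShortfall

variable {Ω : Type*} [MeasurableSpace Ω] {P : Measure Ω} {p : ℝ≥0∞} {U : ℝ → ℝ}
  {f : ℝ → ℝ → ℝ} {B : ℝ}

theorem genShortfallAccSet_mono (hU : Monotone U) (hf : ∀ y, Monotone (f y))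
    (hint : ∀ Y : Ω → ℝ, MemLp Y p P → ∀ m, Integrable (fun ω => U (f (Y ω) m)) P) :
    Monotone (genShortfallAccSet P p U f B) := fun m m' hmm' Y ⟨hY, hBY⟩ =>
  ⟨hY, hBY.trans (integral_mono (hint Y hY m) (hint Y hY m') fun _ => hU (hf _ hmm'))⟩

theorem mem_genShortfallAccSet_of_genShortfall_lt
    (hmono : Monotone (genShortfallAccSet P p U f B)) {X : Ω → ℝ} {z : ℝ}
    (h : genShortfall P p U f B X < z) : X ∈ genShortfallAccSet P p U f B z := by
  obtain ⟨_, ⟨m, hm, rfl⟩, hmz⟩ := sInf_lt_iff.mp h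
  exact hmono (EReal.coe_lt_coe_iff.mp hmz).le hm

theorem genShortfall_le {X : Ω → ℝ} {z : ℝ} (h : X ∈ genShortfallAccSet P p U f B z) :
    genShortfall P p U f B X ≤ z :=
  sInf_le ⟨z, h, rfl⟩

theorem mem_genShortfallAccSet_of_tendsto [IsFiniteMeasure P] (hp : 1 ≤ p) {m : ℝ}
    (hUf : ConcaveOn ℝ univ (fun y => U (f y m)))
    (hint : ∀ Y : Ω → ℝ, MemLp Y p P → Integrable (fun ω => U (f (Y ω) m)) P)
    {X : ℕ → Ω → ℝ} (hX : ∀ n, X n ∈ genShortfallAccSet P p U f B m)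
    {Xlim : Ω → ℝ} (hXlim : MemLp Xlim p P)
    (hconv : Tendsto (fun n => eLpNorm (X n - Xlim) p P) atTop (𝓝 0)) :
    Xlim ∈ genShortfallAccSet P p U f B m :=
  ⟨hXlim, hUf.le_integral_comp_of_tendsto_eLpNorm_one (fun n => (hX n).1.integrable hp)
    (hXlim.integrable hp) (fun n => hint _ (hX n).1) (hint _ hXlim)
    (tendsto_eLpNorm_one_of_tendsto_eLpNorm hp
      (fun n => (hX n).1.aestronglyMeasurable.sub hXlim.aestronglyMeasurable) hconv)
    fun n => (hX n).2⟩

end GenShortfall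

theorem genShortfall_lowerSemicontinuous_general
    {Ω : Type*} [MeasurableSpace Ω] (P : Measure Ω) [IsProbabilityMeasure P]
    (p : ℝ≥0∞) (hp : 1 ≤ p)
    (U : ℝ → ℝ) (hU_mono : Monotone U) (B : ℝ)
    (f : ℝ → ℝ → ℝ)
    (hf_m : ∀ y : ℝ, StrictMono (fun m => f y m))
    (hUf_conc : ∀ m : ℝ, ConcaveOn ℝ Set.univ (fun y => U (f y m)))
    (hint : ∀ Y : Ω → ℝ, MemLp Y p P → ∀ m : ℝ,
      Integrable (fun ω => U (f (Y ω) m)) P)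
    (X : ℕ → Ω → ℝ)
    (Xlim : Ω → ℝ) (hXlim : MemLp Xlim p P)
    (hconv : Filter.Tendsto (fun n => eLpNorm (X n - Xlim) p P) Filter.atTop (nhds 0)) :
    genShortfall P p U f B Xlim ≤
      Filter.liminf (fun n => genShortfall P p U f B (X n)) Filter.atTop := by
  have hmono := genShortfallAccSet_mono (B := B) hU_mono (fun y => (hf_m y).monotone) hint
  refine EReal.le_of_forall_lt_iff_le.mp fun z hz => ?_
  obtain ⟨ns, hns, hlt⟩ :=
    extraction_of_frequently_atTop (frequently_lt_of_liminf_lt (by isBoundedDefault) hz)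
  exact genShortfall_le <| mem_genShortfallAccSet_of_tendsto hp (hUf_conc z)
    (fun Y hY => hint Y hY z) (fun i => mem_genShortfallAccSet_of_genShortfall_lt hmono (hlt i))
    hXlim (hconv.comp hns.tendsto_atTop)

/-- Lower semicontinuity of the generalized shortfall risk measure with respect to
the `L^p`-norm topology: if `X_n → X` in `L^p`, then
`ρ^{U,f,B}(X) ≤ liminf_n ρ^{U,f,B}(X_n)`. -/
theorem genShortfall_lowerSemicontinuous
    {Ω : Type*} [MeasurableSpace Ω] (P : Measure Ω) [IsProbabilityMeasure P]
    (p : ℝ≥0∞) (hp : 1 ≤ p) (hp_ne : p ≠ ⊤)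
    (U : ℝ → ℝ) (hU_mono : Monotone U) (hU_conc : ConcaveOn ℝ Set.univ U)
    (hU_nc : ∃ x y : ℝ, U x ≠ U y) (B : ℝ)
    (f : ℝ → ℝ → ℝ)
    (hf_m : ∀ y : ℝ, StrictMono (fun m => f y m))
    (hf_y : ∀ m : ℝ, StrictMono (fun y => f y m))
    (hUf_conc : ∀ m : ℝ, ConcaveOn ℝ Set.univ (fun y => U (f y m)))
    (hint : ∀ Y : Ω → ℝ, MemLp Y p P → ∀ m : ℝ,
      Integrable (fun ω => U (f (Y ω) m)) P)
    (X : ℕ → Ω → ℝ) (hX : ∀ n, MemLp (X n) p P)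
    (Xlim : Ω → ℝ) (hXlim : MemLp Xlim p P)
    (hconv : Filter.Tendsto (fun n => eLpNorm (X n - Xlim) p P) Filter.atTop (nhds 0)) :
    genShortfall P p U f B Xlim ≤
      Filter.liminf (fun n => genShortfall P p U f B (X n)) Filter.atTop :=
  genShortfall_lowerSemicontinuous_general P p hp U hU_mono B f hf_m hUf_conc hint X Xlim hXlim
    hconv
end

section
/- Assume f(y,m) is non-decreasing in m ∈ ℝ and non-decreasing in y ∈ ℝ, and that (y,m) ↦ U(f(y,m)) is jointly concave on ℝ². Then the generalized shortfall risk measure ρ^{U,f,B} is convex: for all X, Y ∈ L^p with ρ^{U,f,B}(X) and ρ^{U,f,B}(Y) finite, and all λ ∈ [0,1], ρ^{U,f,B}(λX + (1−λ)Y) ≤ λ ρ^{U,f,B}(X) + (1−λ) ρ^{U,f,B}(Y). -/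
open MeasureTheory Real
open scoped ENNReal

/-!
Joint concavity of `(y, m) ↦ U (f y m)` makes the acceptance sets jointly convex: if `X ∈ 𝒜^{mX}`
and `Y ∈ 𝒜^{mY}`, then `λX + (1-λ)Y ∈ 𝒜^{λ mX + (1-λ) mY}`, by integrating the pointwise concavity
inequality. Taking `mX`, `mY` within `ε` of `ρ(X)`, `ρ(Y)` gives `ρ(λX + (1-λ)Y) ≤ λ ρ(X) + (1-λ) ρ(Y) + ε`.
-/

lemma exists_mem_lt_of_sInf_coe_eq {S : Set ℝ} {a c : ℝ}
    (hS : sInf ((↑) '' S : Set EReal) = a) (hac : a < c) : ∃ s ∈ S, s < c := by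
  obtain ⟨_, ⟨s, hs, rfl⟩, hsc⟩ :=
    sInf_lt_iff.mp (hS.trans_lt (EReal.coe_lt_coe_iff.mpr hac))
  exact ⟨s, hs, EReal.coe_lt_coe_iff.mp hsc⟩

lemma sInf_coe_le_convex_comb {S T R : Set ℝ} {a b l : ℝ}
    (hS : sInf ((↑) '' S : Set EReal) = a) (hT : sInf ((↑) '' T : Set EReal) = b)
    (hl : l ∈ Set.Icc (0 : ℝ) 1) (hR : ∀ s ∈ S, ∀ t ∈ T, l * s + (1 - l) * t ∈ R) :
    sInf ((↑) '' R : Set EReal) ≤ ((l * a + (1 - l) * b : ℝ) : EReal) := by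
  obtain ⟨hl0, hl1⟩ := hl
  refine EReal.le_of_forall_lt_iff_le.mp fun z hz => ?_
  set ε := z - (l * a + (1 - l) * b)
  have hε : 0 < ε := sub_pos.mpr (EReal.coe_lt_coe_iff.mp hz)
  obtain ⟨s, hs, hsa⟩ := exists_mem_lt_of_sInf_coe_eq hS (lt_add_of_pos_right a hε)
  obtain ⟨t, ht, htb⟩ := exists_mem_lt_of_sInf_coe_eq hT (lt_add_of_pos_right b hε)
  have hst : l * s + (1 - l) * t ≤ z := by
    calc l * s + (1 - l) * t ≤ l * (a + ε) + (1 - l) * (b + ε) := by gcongr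
      _ = z := by ring
  exact (sInf_le (Set.mem_image_of_mem _ (hR s hs t ht))).trans (EReal.coe_le_coe_iff.mpr hst)

lemma convex_comb_mem_genShortfallAccSet {Ω : Type*} [MeasurableSpace Ω] {P : Measure Ω}
    {p : ℝ≥0∞} {U : ℝ → ℝ} {f : ℝ → ℝ → ℝ} {B : ℝ}
    (hUf_conc : ConcaveOn ℝ Set.univ (fun ym : ℝ × ℝ => U (f ym.1 ym.2)))
    (hint : ∀ Y : Ω → ℝ, MemLp Y p P → ∀ m : ℝ, Integrable (fun ω => U (f (Y ω) m)) P)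
    {X Y : Ω → ℝ} {mX mY l : ℝ} (hl : l ∈ Set.Icc (0 : ℝ) 1)
    (hmX : X ∈ genShortfallAccSet P p U f B mX) (hmY : Y ∈ genShortfallAccSet P p U f B mY) :
    (fun ω => l * X ω + (1 - l) * Y ω) ∈
      genShortfallAccSet P p U f B (l * mX + (1 - l) * mY) := by
  obtain ⟨hl0, hl1⟩ := hl
  have hZ : MemLp (fun ω => l * X ω + (1 - l) * Y ω) p P :=
    (hmX.1.const_mul l).add (hmY.1.const_mul (1 - l))
  have hIX := (hint X hmX.1 mX).const_mul l
  have hIY := (hint Y hmY.1 mY).const_mul (1 - l)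
  have hpointwise : ∀ ω, l * U (f (X ω) mX) + (1 - l) * U (f (Y ω) mY) ≤
      U (f (l * X ω + (1 - l) * Y ω) (l * mX + (1 - l) * mY)) := fun ω => by
    simpa using hUf_conc.2 (Set.mem_univ (X ω, mX)) (Set.mem_univ (Y ω, mY))
      hl0 (sub_nonneg.mpr hl1) (by ring)
  refine ⟨hZ, ?_⟩
  calc B = l * B + (1 - l) * B := by ring
    _ ≤ l * ∫ ω, U (f (X ω) mX) ∂P + (1 - l) * ∫ ω, U (f (Y ω) mY) ∂P := by
        gcongr
        exacts [hmX.2, hmY.2]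
    _ = ∫ ω, (l * U (f (X ω) mX) + (1 - l) * U (f (Y ω) mY)) ∂P := by
        rw [integral_add hIX hIY, integral_const_mul, integral_const_mul]
    _ ≤ _ := integral_mono (hIX.add hIY) (hint _ hZ _) hpointwise

theorem genShortfall_convex_general
    {Ω : Type*} [MeasurableSpace Ω] (P : Measure Ω)
    (p : ℝ≥0∞)
    (U : ℝ → ℝ) (B : ℝ)
    (f : ℝ → ℝ → ℝ)
    (hUf_conc : ConcaveOn ℝ Set.univ (fun ym : ℝ × ℝ => U (f ym.1 ym.2)))
    (hint : ∀ Y : Ω → ℝ, MemLp Y p P → ∀ m : ℝ,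
      Integrable (fun ω => U (f (Y ω) m)) P)
    (X Y : Ω → ℝ)
    (rX rY : ℝ)
    (hrX : genShortfall P p U f B X = (rX : EReal))
    (hrY : genShortfall P p U f B Y = (rY : EReal))
    (l : ℝ) (hl : l ∈ Set.Icc (0 : ℝ) 1) :
    genShortfall P p U f B (fun ω => l * X ω + (1 - l) * Y ω) ≤
      ((l * rX + (1 - l) * rY : ℝ) : EReal) :=
  sInf_coe_le_convex_comb hrX hrY hl fun _ hmX _ hmY =>
    convex_comb_mem_genShortfallAccSet hUf_conc hint hl hmX hmY

/-- Convexity of the generalized shortfall risk measure when `(y,m) ↦ U(f(y,m))`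
is jointly concave: for `X, Y` with finite (real) risk values `rX, rY`,
`ρ(λX+(1-λ)Y) ≤ λ rX + (1-λ) rY`. -/
theorem genShortfall_convex
    {Ω : Type*} [MeasurableSpace Ω] (P : Measure Ω) [IsProbabilityMeasure P]
    (p : ℝ≥0∞)
    (U : ℝ → ℝ) (hU_mono : Monotone U) (hU_conc : ConcaveOn ℝ Set.univ U)
    (hU_nc : ∃ x y : ℝ, U x ≠ U y) (B : ℝ)
    (f : ℝ → ℝ → ℝ)
    (hf_m : ∀ y : ℝ, Monotone (fun m => f y m))
    (hf_y : ∀ m : ℝ, Monotone (fun y => f y m))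
    (hUf_conc : ConcaveOn ℝ Set.univ (fun ym : ℝ × ℝ => U (f ym.1 ym.2)))
    (hint : ∀ Y : Ω → ℝ, MemLp Y p P → ∀ m : ℝ,
      Integrable (fun ω => U (f (Y ω) m)) P)
    (X Y : Ω → ℝ) (hX : MemLp X p P) (hY : MemLp Y p P)
    (rX rY : ℝ)
    (hrX : genShortfall P p U f B X = (rX : EReal))
    (hrY : genShortfall P p U f B Y = (rY : EReal))
    (l : ℝ) (hl : l ∈ Set.Icc (0 : ℝ) 1) :
    genShortfall P p U f B (fun ω => l * X ω + (1 - l) * Y ω) ≤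
      ((l * rX + (1 - l) * rY : ℝ) : EReal) :=
  genShortfall_convex_general P p U B f hUf_conc hint X Y rX rY hrX hrY l hl
end

section
/- Assume f(y,m) is non-decreasing in m ∈ ℝ and non-decreasing in y ∈ ℝ, y ↦ U(f(y,m)) is concave for each m ∈ ℝ, and additionally f(y,k) ≤ f(y−m, k+m) for all y, k ∈ ℝ and all m > 0. Then the generalized shortfall risk measure ρ^{U,f,B} is cash subadditive: for every X ∈ L^p and every constant m ≥ 0, ρ^{U,f,B}(X + m) ≥ ρ^{U,f,B}(X) − m (inequality in the extended reals). -/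
open MeasureTheory Real
open scoped ENNReal

lemma EReal.sInf_image_coe_sub_le {S T : Set ℝ} {m : ℝ} (hST : ∀ k ∈ T, k + m ∈ S) :
    sInf ((fun x : ℝ => (x : EReal)) '' S) - (m : EReal) ≤
      sInf ((fun x : ℝ => (x : EReal)) '' T) := by
  refine le_sInf ?_
  rintro _ ⟨k, hk, rfl⟩
  calc sInf ((fun x : ℝ => (x : EReal)) '' S) - (m : EReal)
      ≤ ((k + m : ℝ) : EReal) - (m : EReal) :=
        EReal.sub_le_sub (sInf_le ⟨k + m, hST k hk, rfl⟩) le_rfl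
    _ = (k : EReal) := by rw [← EReal.coe_sub, _root_.add_sub_cancel_right]

lemma apply_add_le_apply_add_of_nonneg {f : ℝ → ℝ → ℝ}
    (hf : ∀ y k m : ℝ, 0 < m → f y k ≤ f (y - m) (k + m)) (y k : ℝ) {m : ℝ} (hm : 0 ≤ m) :
    f (y + m) k ≤ f y (k + m) := by
  rcases hm.eq_or_lt with rfl | hpos
  · simp
  · simpa using hf (y + m) k m hpos

lemma mem_genShortfallAccSet_add_of_add_const_mem {Ω : Type*} [MeasurableSpace Ω]
    {P : Measure Ω} {p : ℝ≥0∞} {U : ℝ → ℝ} {f : ℝ → ℝ → ℝ} {B : ℝ}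
    (hU : Monotone U) (hf : ∀ y k m : ℝ, 0 < m → f y k ≤ f (y - m) (k + m))
    (hint : ∀ Y : Ω → ℝ, MemLp Y p P → ∀ m : ℝ, Integrable (fun ω => U (f (Y ω) m)) P)
    {X : Ω → ℝ} (hX : MemLp X p P) {k m : ℝ} (hm : 0 ≤ m)
    (hXm : (fun ω => X ω + m) ∈ genShortfallAccSet P p U f B k) :
    X ∈ genShortfallAccSet P p U f B (k + m) := by
  obtain ⟨hXm_mem, hB⟩ := hXm
  refine ⟨hX, hB.trans (integral_mono (hint _ hXm_mem k) (hint X hX (k + m)) fun ω => ?_)⟩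
  exact hU (apply_add_le_apply_add_of_nonneg hf (X ω) k hm)

theorem genShortfall_cashSubadditive_general
    {Ω : Type*} [MeasurableSpace Ω] (P : Measure Ω)
    (p : ℝ≥0∞)
    (U : ℝ → ℝ) (hU_mono : Monotone U) (B : ℝ)
    (f : ℝ → ℝ → ℝ)
    (hf_csa : ∀ y k m : ℝ, 0 < m → f y k ≤ f (y - m) (k + m))
    (hint : ∀ Y : Ω → ℝ, MemLp Y p P → ∀ m : ℝ,
      Integrable (fun ω => U (f (Y ω) m)) P)
    (X : Ω → ℝ) (hX : MemLp X p P) (m : ℝ) (hm : 0 ≤ m) :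
    genShortfall P p U f B X - (m : EReal) ≤
      genShortfall P p U f B (fun ω => X ω + m) :=
  EReal.sInf_image_coe_sub_le fun _ hk =>
    mem_genShortfallAccSet_add_of_add_const_mem hU_mono hf_csa hint hX hm hk

/-- Cash subadditivity of the generalized shortfall risk measure under the
aggregator condition `f(y,k) ≤ f(y-m, k+m)` for `m > 0`:
`ρ^{U,f,B}(X + m) ≥ ρ^{U,f,B}(X) - m` for every constant `m ≥ 0` (in the
extended reals). -/
theorem genShortfall_cashSubadditive
    {Ω : Type*} [MeasurableSpace Ω] (P : Measure Ω) [IsProbabilityMeasure P]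
    (p : ℝ≥0∞)
    (U : ℝ → ℝ) (hU_mono : Monotone U) (hU_conc : ConcaveOn ℝ Set.univ U)
    (hU_nc : ∃ x y : ℝ, U x ≠ U y) (B : ℝ)
    (f : ℝ → ℝ → ℝ)
    (hf_m : ∀ y : ℝ, Monotone (fun m => f y m))
    (hf_y : ∀ m : ℝ, Monotone (fun y => f y m))
    (hUf_conc : ∀ m : ℝ, ConcaveOn ℝ Set.univ (fun y => U (f y m)))
    (hf_csa : ∀ y k m : ℝ, 0 < m → f y k ≤ f (y - m) (k + m))
    (hint : ∀ Y : Ω → ℝ, MemLp Y p P → ∀ m : ℝ,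
      Integrable (fun ω => U (f (Y ω) m)) P)
    (X : Ω → ℝ) (hX : MemLp X p P) (m : ℝ) (hm : 0 ≤ m) :
    genShortfall P p U f B X - (m : EReal) ≤
      genShortfall P p U f B (fun ω => X ω + m) :=
  genShortfall_cashSubadditive_general P p U hU_mono B f hf_csa hint X hX m hm
end

section
/- Fix 0 ≤ t ≤ u ≤ T, β ≥ 0, and let X ∈ L^∞(𝓕_u). Let 0 < q₁ ≤ q₂ < 1 and real numbers α₀, α_{q₁}, α_{q₂}, α₁ with −1 ≤ α₀ ≤ α_{q₁} ≤ α_{q₂} ≤ α₁ (note α ≥ −1 ≥ 1/(q−1) for q ∈ (0,1), so all the generalized exponentials below are well defined). Then, almost surely, E[(X+β)⁻ + α₀ | 𝓕_t] ≤ ln_{q₁} E[exp_{q₁}((X+β)⁻ + α_{q₁}) | 𝓕_t] ≤ ln_{q₂} E[exp_{q₂}((X+β)⁻ + α_{q₂}) | 𝓕_t] ≤ ln E[exp((X+β)⁻ + α₁) | 𝓕_t]. In particular, the q-entropic risk measure on losses ρ^q_{tu}(X) = ln_q E[exp_q((X+β)⁻ + α_q) | 𝓕_t] is non-decreasing in q,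 and is bounded below by the conditional expectation ρ⁰_{tu}(X) = E[(X+β)⁻ + α₀ | 𝓕_t] and above by the classical entropic risk measure ρ¹_{tu}(X) = ln E[exp((X+β)⁻ + α₁) | 𝓕_t]. -/
/-!
Each of the four quantities is a conditional quasi-arithmetic mean `ℓ (E[e ∘ W | 𝓕_t])` of a
shifted loss `W = (X + β)⁻ + α ≥ -1`: for `(e, ℓ) = (exp_q, ln_q)`, with `q = 0` giving the
conditional expectation, and for `(exp, log)`. Raising `α` raises each mean, and conditional
Jensen's inequality for `e₂ ∘ ℓ₁` shows that the mean for `e₁` lies below the one for `e₂`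
as soon as `e₂ ∘ ℓ₁` is convex. This convexity amounts to monotonicity of `e₂' / e₁'`, and
`exp_q' = exp_q ^ q` has logarithmic derivative `q / (1 + (1 - q) x)`, which increases with `q`
exactly when `x ≥ -1`.
-/

open MeasureTheory Real
open scoped ENNReal

/-- Tsallis generalized exponential `exp_q(x) = (1+(1-q)x)^{1/(1-q)}`. -/
noncomputable def expq (q x : ℝ) : ℝ := (1 + (1 - q) * x) ^ ((1 : ℝ) / (1 - q))

/-- Tsallis generalized logarithm `ln_q(x) = (x^{1-q} - 1)/(1-q)`. -/
noncomputable def lnq (q x : ℝ) : ℝ := (x ^ (1 - q) - 1) / (1 - q)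

open Set Filter

lemma monotoneOn_div_of_hasDerivAt {s : Set ℝ} (hs : Convex ℝ s) {f g κf κg : ℝ → ℝ}
    (hf : ∀ x ∈ s, HasDerivAt f (κf x * f x) x) (hg : ∀ x ∈ s, HasDerivAt g (κg x * g x) x)
    (hf0 : ∀ x ∈ s, 0 ≤ f x) (hg0 : ∀ x ∈ s, 0 < g x) (hκ : ∀ x ∈ s, κg x ≤ κf x) :
    MonotoneOn (fun x => f x / g x) s := by
  have hdiv : ∀ x ∈ s, HasDerivAt (fun x => f x / g x)
      ((κf x * f x * g x - f x * (κg x * g x)) / g x ^ 2) x :=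
    fun x hx => (hf x hx).div (hg x hx) (hg0 x hx).ne'
  refine monotoneOn_of_hasDerivWithinAt_nonneg hs
    (fun x hx => (hdiv x hx).continuousAt.continuousWithinAt)
    (fun x hx => (hdiv x (interior_subset hx)).hasDerivWithinAt) fun x hx => ?_
  have hx := interior_subset hx
  have : 0 ≤ f x * g x * (κf x - κg x) :=
    mul_nonneg (mul_nonneg (hf0 x hx) (hg0 x hx).le) (sub_nonneg.2 (hκ x hx))
  exact div_nonneg (by linarith) (sq_nonneg _)

section Tsallis

variable {q q₁ q₂ x y : ℝ}

lemma expq_zero (x : ℝ) : expq 0 x = 1 + x := by simp [expq]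

lemma lnq_zero (x : ℝ) : lnq 0 x = x - 1 := by simp [lnq]

lemma continuous_expq (hq : q < 1) : Continuous (expq q) :=
  (Real.continuous_rpow_const (div_nonneg zero_le_one (sub_pos.2 hq).le)).comp (by fun_prop)

lemma continuous_lnq (hq : q < 1) : Continuous (lnq q) :=
  ((Real.continuous_rpow_const (sub_pos.2 hq).le).sub continuous_const).div_const _

lemma expq_pos (hx : 0 < 1 + (1 - q) * x) : 0 < expq q x := Real.rpow_pos_of_pos hx _

lemma expq_nonneg (hx : 0 ≤ 1 + (1 - q) * x) : 0 ≤ expq q x := Real.rpow_nonneg hx _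

lemma expq_rpow_one_sub (hq : q < 1) (hx : 0 ≤ 1 + (1 - q) * x) :
    expq q x ^ (1 - q) = 1 + (1 - q) * x := by
  rw [expq, ← Real.rpow_mul hx, one_div_mul_cancel (sub_pos.2 hq).ne', Real.rpow_one]

lemma lnq_expq (hq : q < 1) (hx : 0 ≤ 1 + (1 - q) * x) : lnq q (expq q x) = x := by
  rw [lnq, expq_rpow_one_sub hq hx]
  field_simp [(sub_pos.2 hq).ne']
  ring

lemma expq_lnq (hq : q < 1) (hx : 0 ≤ x) : expq q (lnq q x) = x := by
  have hq' : 1 - q ≠ 0 := (sub_pos.2 hq).ne'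
  rw [expq, lnq, mul_div_cancel₀ _ hq', add_sub_cancel, ← Real.rpow_mul hx,
    mul_one_div_cancel hq', Real.rpow_one]

lemma expq_le_expq (hq : q < 1) (hx : 0 ≤ 1 + (1 - q) * x) (hxy : x ≤ y) :
    expq q x ≤ expq q y := by
  have hq' := sub_pos.2 hq
  exact Real.rpow_le_rpow hx (by nlinarith) (by positivity)

lemma lnq_strictMonoOn (hq : q < 1) : StrictMonoOn (lnq q) (Ici 0) := fun _ hx _ _ hxy =>
  div_lt_div_of_pos_right (sub_lt_sub_right (Real.rpow_lt_rpow hx hxy (sub_pos.2 hq)) 1)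
    (sub_pos.2 hq)

lemma lnq_le_lnq (hq : q < 1) (hx : 0 ≤ x) (hxy : x ≤ y) : lnq q x ≤ lnq q y :=
  (lnq_strictMonoOn hq).monotoneOn hx (le_trans hx hxy : 0 ≤ y) hxy

lemma le_lnq_of_expq_le (hq : q < 1) (hx : 0 ≤ 1 + (1 - q) * x) (h : expq q x ≤ y) :
    x ≤ lnq q y :=
  lnq_expq hq hx ▸ lnq_le_lnq hq (expq_nonneg hx) h

lemma hasDerivAt_expq (hq : q < 1) (hx : 0 < 1 + (1 - q) * x) :
    HasDerivAt (expq q) (expq q x ^ q) x := by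
  have hq' : 1 - q ≠ 0 := (sub_pos.2 hq).ne'
  have h := ((hasDerivAt_id' x).const_mul (1 - q) |>.const_add 1).rpow_const
    (p := 1 / (1 - q)) (Or.inl hx.ne')
  refine h.congr_deriv ?_
  rw [expq, ← Real.rpow_mul hx.le, show 1 / (1 - q) - 1 = 1 / (1 - q) * q by field_simp; ring]
  field_simp

lemma hasDerivAt_lnq (hq : q < 1) (hx : 0 < x) : HasDerivAt (lnq q) (x ^ (-q)) x := by
  have h := ((Real.hasDerivAt_rpow_const (p := 1 - q) (Or.inl hx.ne')).sub_const 1).div_const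
    (1 - q)
  refine h.congr_deriv ?_
  rw [sub_sub_cancel_left]
  field_simp [(sub_pos.2 hq).ne']

lemma hasDerivAt_expq_rpow (hq : q < 1) (hx : 0 < 1 + (1 - q) * x) :
    HasDerivAt (fun x => expq q x ^ q) (q / (1 + (1 - q) * x) * expq q x ^ q) x := by
  have h := (hasDerivAt_expq hq hx).rpow_const (p := q) (Or.inl (expq_pos hx).ne')
  convert h using 1
  have : expq q x ^ (q - 1) = (1 + (1 - q) * x)⁻¹ := by
    rw [← neg_sub, Real.rpow_neg (expq_nonneg hx.le), expq_rpow_one_sub hq hx.le]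
  rw [this]
  ring

lemma one_add_mul_pos (hq0 : 0 ≤ q) (hq : q < 1) (hx : -1 < x) :
    0 < 1 + (1 - q) * x := by nlinarith

lemma monotoneOn_expq_rpow_div_expq_rpow (hq₁ : 0 ≤ q₁) (hq₁₂ : q₁ ≤ q₂) (hq₂ : q₂ < 1) :
    MonotoneOn (fun x => expq q₂ x ^ q₂ / expq q₁ x ^ q₁) (Ioi (-1)) := by
  have hq₁' : q₁ < 1 := hq₁₂.trans_lt hq₂
  refine monotoneOn_div_of_hasDerivAt (convex_Ioi _)
    (fun x hx => hasDerivAt_expq_rpow hq₂ (one_add_mul_pos (hq₁.trans hq₁₂) hq₂ hx))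
    (fun x hx => hasDerivAt_expq_rpow hq₁' (one_add_mul_pos hq₁ hq₁' hx))
    (fun x hx => (Real.rpow_pos_of_pos (expq_pos (one_add_mul_pos (hq₁.trans hq₁₂) hq₂ hx)) _).le)
    (fun x hx => Real.rpow_pos_of_pos (expq_pos (one_add_mul_pos hq₁ hq₁' hx)) _) fun x hx => ?_
  have h₁ := one_add_mul_pos hq₁ hq₁' hx
  have h₂ := one_add_mul_pos (hq₁.trans hq₁₂) hq₂ hx
  have hx : -1 < x := hx
  rw [div_le_div_iff₀ h₁ h₂]
  nlinarith [mul_nonneg (sub_nonneg.2 hq₁₂) (neg_lt_iff_pos_add.1 hx).le]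

lemma monotoneOn_exp_div_expq_rpow (hq0 : 0 ≤ q) (hq : q < 1) :
    MonotoneOn (fun x => exp x / expq q x ^ q) (Ioi (-1)) := by
  refine monotoneOn_div_of_hasDerivAt (κf := fun _ => 1) (convex_Ioi _)
    (fun x _ => by simpa using Real.hasDerivAt_exp x)
    (fun x hx => hasDerivAt_expq_rpow hq (one_add_mul_pos hq0 hq hx))
    (fun x _ => (exp_pos x).le)
    (fun x hx => Real.rpow_pos_of_pos (expq_pos (one_add_mul_pos hq0 hq hx)) _) fun x hx => ?_
  have h := one_add_mul_pos hq0 hq hx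
  have hx : -1 < x := hx
  rw [div_le_one h]
  nlinarith

lemma convexOn_comp_lnq (hq0 : 0 ≤ q) (hq : q < 1) {v v' : ℝ → ℝ} (hv : Continuous v)
    (hv' : ∀ x, -1 < x → HasDerivAt v (v' x) x)
    (hmono : MonotoneOn (fun x => v' x / expq q x ^ q) (Ioi (-1))) :
    ConvexOn ℝ (Ici (expq q (-1))) (v ∘ lnq q) := by
  have hbase : 0 ≤ 1 + (1 - q) * -1 := by linarith
  have hdom : ∀ z ∈ Ioi (expq q (-1)), 0 < z ∧ -1 < lnq q z := fun z hz =>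
    have hz0 : 0 < z := (expq_nonneg hbase).trans_lt hz
    ⟨hz0, lnq_expq hq hbase ▸ lnq_strictMonoOn hq (expq_nonneg hbase) hz0.le hz⟩
  have hderiv : ∀ z ∈ Ioi (expq q (-1)),
      HasDerivAt (v ∘ lnq q) (v' (lnq q z) / expq q (lnq q z) ^ q) z := fun z hz => by
    obtain ⟨hz0, hz⟩ := hdom z hz
    rw [expq_lnq hq hz0.le, div_eq_mul_inv, ← Real.rpow_neg hz0.le]
    exact (hv' _ hz).comp z (hasDerivAt_lnq hq hz0)
  refine MonotoneOn.convexOn_of_deriv (convex_Ici _) (hv.comp (continuous_lnq hq)).continuousOn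
    ?_ ?_ <;> rw [interior_Ici]
  · exact fun z hz => (hderiv z hz).differentiableAt.differentiableWithinAt
  · intro z hz w hw hzw
    rw [(hderiv z hz).deriv, (hderiv w hw).deriv]
    exact hmono (hdom z hz).2 (hdom w hw).2 (lnq_le_lnq hq (hdom z hz).1.le hzw)

lemma convexOn_expq_comp_lnq (hq₁ : 0 ≤ q₁) (hq₁₂ : q₁ ≤ q₂) (hq₂ : q₂ < 1) :
    ConvexOn ℝ (Ici (expq q₁ (-1))) (expq q₂ ∘ lnq q₁) :=
  convexOn_comp_lnq hq₁ (hq₁₂.trans_lt hq₂) (continuous_expq hq₂)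
    (fun _ hx => hasDerivAt_expq hq₂ (one_add_mul_pos (hq₁.trans hq₁₂) hq₂ hx))
    (monotoneOn_expq_rpow_div_expq_rpow hq₁ hq₁₂ hq₂)

lemma convexOn_exp_comp_lnq (hq0 : 0 ≤ q) (hq : q < 1) :
    ConvexOn ℝ (Ici (expq q (-1))) (exp ∘ lnq q) :=
  convexOn_comp_lnq hq0 hq continuous_exp (fun x _ => Real.hasDerivAt_exp x)
    (monotoneOn_exp_div_expq_rpow hq0 hq)

end Tsallis

section CondExp

variable {Ω : Type*} {m m0 : MeasurableSpace Ω} {μ : Measure Ω} [IsFiniteMeasure μ] {W : Ω → ℝ}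

lemma MeasureTheory.MemLp.integrable_comp {e : ℝ → ℝ} (he : Continuous e) (hW : MemLp W ⊤ μ) :
    Integrable (e ∘ W) μ := by
  obtain ⟨C, hC⟩ := eLpNormEssSup_lt_top_iff_isBoundedUnder.1
    (by simpa [eLpNorm_exponent_top] using hW.2)
  obtain ⟨K, hK⟩ := (isCompact_closedBall (0 : ℝ) C).exists_bound_of_continuousOn he.continuousOn
  refine Integrable.of_bound (he.comp_aestronglyMeasurable hW.1) K ?_
  filter_upwards [hC] with ω hω
  exact hK _ (mem_closedBall_zero_iff.2 hω)

theorem ConvexOn.condExp_quasiMean_le (hm : m ≤ m0) {e₁ ℓ₁ e₂ ℓ₂ : ℝ → ℝ} {I D : Set ℝ}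
    (hφ : ConvexOn ℝ D (e₂ ∘ ℓ₁)) (hφc : LowerSemicontinuousOn (e₂ ∘ ℓ₁) D) (hD : IsClosed D)
    (he₁ : MapsTo e₁ I D) (hℓ₁ : LeftInvOn ℓ₁ e₁ I)
    (hℓ₂ : ∀ z ∈ D, ∀ y, e₂ (ℓ₁ z) ≤ y → ℓ₁ z ≤ ℓ₂ y)
    (hW : ∀ᵐ ω ∂μ, W ω ∈ I) (hi₁ : Integrable (e₁ ∘ W) μ) (hi₂ : Integrable (e₂ ∘ W) μ) :
    ∀ᵐ ω ∂μ, ℓ₁ (μ[e₁ ∘ W|m] ω) ≤ ℓ₂ (μ[e₂ ∘ W|m] ω) := by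
  have hcomp : (e₂ ∘ ℓ₁) ∘ (e₁ ∘ W) =ᵐ[μ] e₂ ∘ W := by
    filter_upwards [hW] with ω hω
    simp [hℓ₁ hω]
  have hY : ∀ᵐ ω ∂μ, (e₁ ∘ W) ω ∈ D := hW.mono fun ω hω => he₁ hω
  filter_upwards [hφ.1.condExp_mem hm hi₁ hD hY,
    hφ.map_condExp_le hm hφc hY hD hi₁ (hi₂.congr hcomp.symm),
    condExp_congr_ae (m := m) hcomp] with ω hmem hjensen hcongr
  exact hℓ₂ _ hmem _ (hjensen.trans_eq hcongr)

variable {q q₁ q₂ : ℝ}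

lemma mapsTo_expq_Ici (hq0 : 0 ≤ q) (hq : q < 1) :
    MapsTo (expq q) (Ici (-1)) (Ici (expq q (-1))) :=
  fun _ hx => expq_le_expq hq (by linarith) hx

lemma leftInvOn_lnq_expq (hq0 : 0 ≤ q) (hq : q < 1) : LeftInvOn (lnq q) (expq q) (Ici (-1)) :=
  fun x hx => lnq_expq hq (by nlinarith [mem_Ici.1 hx])

lemma neg_one_le_lnq (hq0 : 0 ≤ q) (hq : q < 1) {z : ℝ} (hz : expq q (-1) ≤ z) :
    -1 ≤ lnq q z :=
  le_lnq_of_expq_le hq (by linarith) hz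

theorem lnq_condExp_expq_le_lnq_condExp_expq (hm : m ≤ m0) (hq₁ : 0 ≤ q₁) (hq₁₂ : q₁ ≤ q₂)
    (hq₂ : q₂ < 1) (hW : MemLp W ⊤ μ) (hW1 : ∀ᵐ ω ∂μ, -1 ≤ W ω) :
    ∀ᵐ ω ∂μ, lnq q₁ (μ[expq q₁ ∘ W|m] ω) ≤ lnq q₂ (μ[expq q₂ ∘ W|m] ω) := by
  have hq₁' := hq₁₂.trans_lt hq₂
  refine (convexOn_expq_comp_lnq hq₁ hq₁₂ hq₂).condExp_quasiMean_le hm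
    ((continuous_expq hq₂).comp (continuous_lnq hq₁')).continuousOn.lowerSemicontinuousOn
    isClosed_Ici (mapsTo_expq_Ici hq₁ hq₁') (leftInvOn_lnq_expq hq₁ hq₁') (fun z hz y hy => ?_)
    hW1 (hW.integrable_comp (continuous_expq hq₁')) (hW.integrable_comp (continuous_expq hq₂))
  have := neg_one_le_lnq hq₁ hq₁' hz
  exact le_lnq_of_expq_le hq₂ (by nlinarith) hy

theorem lnq_condExp_expq_le_log_condExp_exp (hm : m ≤ m0) (hq0 : 0 ≤ q) (hq : q < 1)
    (hW : MemLp W ⊤ μ) (hW1 : ∀ᵐ ω ∂μ, -1 ≤ W ω) :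
    ∀ᵐ ω ∂μ, lnq q (μ[expq q ∘ W|m] ω) ≤ log (μ[exp ∘ W|m] ω) :=
  (convexOn_exp_comp_lnq hq0 hq).condExp_quasiMean_le hm
    (continuous_exp.comp (continuous_lnq hq)).continuousOn.lowerSemicontinuousOn
    isClosed_Ici (mapsTo_expq_Ici hq0 hq) (leftInvOn_lnq_expq hq0 hq)
    (fun _ _ _ hy => (le_log_iff_exp_le ((exp_pos _).trans_le hy)).2 hy)
    hW1 (hW.integrable_comp (continuous_expq hq)) (hW.integrable_comp continuous_exp)

theorem lnq_condExp_expq_mono (hq0 : 0 ≤ q) (hq : q < 1) {W' : Ω → ℝ} (hW : MemLp W ⊤ μ)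
    (hW' : MemLp W' ⊤ μ) (hW1 : ∀ᵐ ω ∂μ, -1 ≤ W ω) (hWW' : W ≤ᵐ[μ] W') :
    ∀ᵐ ω ∂μ, lnq q (μ[expq q ∘ W|m] ω) ≤ lnq q (μ[expq q ∘ W'|m] ω) := by
  have hdom : ∀ᵐ ω ∂μ, 0 ≤ 1 + (1 - q) * W ω := hW1.mono fun ω hω => by nlinarith
  have hle : expq q ∘ W ≤ᵐ[μ] expq q ∘ W' := by
    filter_upwards [hdom, hWW'] with ω h h' using expq_le_expq hq h h'
  filter_upwards [condExp_mono (m := m) (hW.integrable_comp (continuous_expq hq))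
      (hW'.integrable_comp (continuous_expq hq)) hle,
    condExp_nonneg (m := m) (hdom.mono fun ω h => expq_nonneg h)] with ω h h0
  exact lnq_le_lnq hq h0 h

theorem condExp_eq_lnq_zero_condExp_expq_zero (hm : m ≤ m0) (hW : Integrable W μ) :
    μ[W|m] =ᵐ[μ] fun ω => lnq 0 (μ[expq 0 ∘ W|m] ω) := by
  have h : expq 0 ∘ W = (fun _ => 1) + W := funext fun ω => expq_zero (W ω)
  filter_upwards [condExp_add (integrable_const 1) hW m] with ω hω
  rw [h, hω, condExp_const hm, lnq_zero]
  simp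

end CondExp

theorem q_entropic_monotone_in_q_general
    {Ω : Type*} {m0 : MeasurableSpace Ω} (P : Measure Ω) [IsProbabilityMeasure P]
    (ℱ : Filtration ℝ m0) (t : ℝ)
    (β : ℝ)
    (q₁ q₂ : ℝ) (hq₁ : 0 < q₁) (hq₁₂ : q₁ ≤ q₂) (hq₂ : q₂ < 1)
    (α₀ αq₁ αq₂ α₁ : ℝ)
    (hα₀ : -1 ≤ α₀) (h₀₁ : α₀ ≤ αq₁) (h₁₂ : αq₁ ≤ αq₂) (h₂₃ : αq₂ ≤ α₁)
    (X : Ω → ℝ) (hXb : MemLp X ⊤ P) :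
    ∀ᵐ ω ∂P,
      (P[fun ω' => max (-(X ω' + β)) 0 + α₀ | ℱ t]) ω
          ≤ lnq q₁ ((P[fun ω' => expq q₁ (max (-(X ω' + β)) 0 + αq₁) | ℱ t]) ω)
      ∧ lnq q₁ ((P[fun ω' => expq q₁ (max (-(X ω' + β)) 0 + αq₁) | ℱ t]) ω)
          ≤ lnq q₂ ((P[fun ω' => expq q₂ (max (-(X ω' + β)) 0 + αq₂) | ℱ t]) ω)
      ∧ lnq q₂ ((P[fun ω' => expq q₂ (max (-(X ω' + β)) 0 + αq₂) | ℱ t]) ω)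
          ≤ Real.log ((P[fun ω' => Real.exp (max (-(X ω' + β)) 0 + α₁) | ℱ t]) ω) := by
  have hm := ℱ.le t
  have hq₁' := hq₁₂.trans_lt hq₂
  have hq₂0 := hq₁.le.trans hq₁₂
  have hαq₁ := hα₀.trans h₀₁
  have hαq₂ := hαq₁.trans h₁₂
  have hα₁ := hαq₂.trans h₂₃
  have hW (α : ℝ) : MemLp (fun ω => max (-(X ω + β)) 0 + α) ⊤ P :=
    (hXb.add (memLp_const β)).neg_part.add (memLp_const α)
  have hW1 {α : ℝ} (hα : -1 ≤ α) : ∀ᵐ ω ∂P, -1 ≤ max (-(X ω + β)) 0 + α :=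
    ae_of_all _ fun ω => by linarith [le_max_right (-(X ω + β)) 0]
  have hWmono {α α' : ℝ} (h : α ≤ α') :
      (fun ω => max (-(X ω + β)) 0 + α) ≤ᵐ[P] fun ω => max (-(X ω + β)) 0 + α' :=
    ae_of_all _ fun ω => by simpa using h
  filter_upwards [condExp_eq_lnq_zero_condExp_expq_zero hm ((hW α₀).integrable le_top),
    lnq_condExp_expq_mono le_rfl zero_lt_one (hW α₀) (hW αq₁) (hW1 hα₀) (hWmono h₀₁),
    lnq_condExp_expq_le_lnq_condExp_expq hm le_rfl hq₁.le hq₁' (hW αq₁) (hW1 hαq₁),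
    lnq_condExp_expq_mono hq₁.le hq₁' (hW αq₁) (hW αq₂) (hW1 hαq₁) (hWmono h₁₂),
    lnq_condExp_expq_le_lnq_condExp_expq hm hq₁.le hq₁₂ hq₂ (hW αq₂) (hW1 hαq₂),
    lnq_condExp_expq_mono hq₂0 hq₂ (hW αq₂) (hW α₁) (hW1 hαq₂) (hWmono h₂₃),
    lnq_condExp_expq_le_log_condExp_exp hm hq₂0 hq₂ (hW α₁) (hW1 hα₁)]
    with ω h₀ h₁ h₂ h₃ h₄ h₅ h₆
  exact ⟨h₀.trans_le (h₁.trans h₂), h₃.trans h₄, h₅.trans h₆⟩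

/-- Monotonicity in `q` of the q-entropic risk measure on losses: almost surely,
`E[(X+β)⁻ + α₀ | 𝓕_t] ≤ ρ^{q₁}_{tu}(X) ≤ ρ^{q₂}_{tu}(X) ≤ ln E[exp((X+β)⁻ + α₁) | 𝓕_t]`
for `0 < q₁ ≤ q₂ < 1` and `-1 ≤ α₀ ≤ α_{q₁} ≤ α_{q₂} ≤ α₁`. -/
theorem q_entropic_monotone_in_q
    {Ω : Type*} {m0 : MeasurableSpace Ω} (P : Measure Ω) [IsProbabilityMeasure P]
    (T : ℝ) (ℱ : Filtration ℝ m0) (t u : ℝ)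
    (h0t : 0 ≤ t) (htu : t ≤ u) (huT : u ≤ T)
    (β : ℝ) (hβ : 0 ≤ β)
    (q₁ q₂ : ℝ) (hq₁ : 0 < q₁) (hq₁₂ : q₁ ≤ q₂) (hq₂ : q₂ < 1)
    (α₀ αq₁ αq₂ α₁ : ℝ)
    (hα₀ : -1 ≤ α₀) (h₀₁ : α₀ ≤ αq₁) (h₁₂ : αq₁ ≤ αq₂) (h₂₃ : αq₂ ≤ α₁)
    (X : Ω → ℝ) (hX : StronglyMeasurable[ℱ u] X) (hXb : MemLp X ⊤ P) :
    ∀ᵐ ω ∂P,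
      (P[fun ω' => max (-(X ω' + β)) 0 + α₀ | ℱ t]) ω
          ≤ lnq q₁ ((P[fun ω' => expq q₁ (max (-(X ω' + β)) 0 + αq₁) | ℱ t]) ω)
      ∧ lnq q₁ ((P[fun ω' => expq q₁ (max (-(X ω' + β)) 0 + αq₁) | ℱ t]) ω)
          ≤ lnq q₂ ((P[fun ω' => expq q₂ (max (-(X ω' + β)) 0 + αq₂) | ℱ t]) ω)
      ∧ lnq q₂ ((P[fun ω' => expq q₂ (max (-(X ω' + β)) 0 + αq₂) | ℱ t]) ω)
          ≤ Real.log ((P[fun ω' => Real.exp (max (-(X ω' + β)) 0 + α₁) | ℱ t]) ω) :=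
  q_entropic_monotone_in_q_general P ℱ t β q₁ q₂ hq₁ hq₁₂ hq₂ α₀ αq₁ αq₂ α₁ hα₀ h₀₁ h₁₂ h₂₃ X hXb
end

section
/- Let (U_u)_{u∈[0,T]} be a family of non-decreasing concave functions U_u : ℝ → ℝ and (B_{tu})_{0≤t≤u≤T} a family of real targets. Assume the family (U_u − B_{tu}) is non-increasing in the horizon, i.e. for all 0 ≤ t ≤ u ≤ v ≤ T and all x ∈ ℝ, U_u(x) − B_{tu} ≥ U_v(x) − B_{tv}. Then the acceptance sets of the fully-dynamic shortfall risk measure satisfy 𝒜^{U,B}_{tv} ∩ L^p(𝓕_u) ⊆ 𝒜^{U,B}_{tu}: for every 𝓕_u-measurable X ∈ L^p with U_u(X) and U_v(X) integrable, if E[U_v(X) | 𝓕_t] ≥ B_{tv} a.s. then E[U_u(X) | 𝓕_t] ≥ B_{tu} a.s. (This inclusion of acceptance sets is the h-longevity property of the associated fully-dynamic shortfall risk measure.) -/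
open MeasureTheory Real
open scoped ENNReal

namespace MeasureTheory

variable {Ω : Type*} {m m0 : MeasurableSpace Ω} {μ : Measure Ω} {f g : Ω → ℝ}

lemma condExp_add_const_ae_eq [IsFiniteMeasure μ] (hm : m ≤ m0) (hf : Integrable f μ)
    (c : ℝ) :
    μ[fun ω => f ω + c | m] =ᵐ[μ] fun ω => μ[f | m] ω + c := by
  filter_upwards [condExp_add hf (integrable_const c) m] with ω hω
  rwa [condExp_const hm c] at hω

lemma condExp_add_const_le_condExp [IsFiniteMeasure μ] (hm : m ≤ m0) (hf : Integrable f μ)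
    (hg : Integrable g μ) {c : ℝ} (hfg : ∀ᵐ ω ∂μ, f ω + c ≤ g ω) :
    ∀ᵐ ω ∂μ, μ[f | m] ω + c ≤ μ[g | m] ω := by
  filter_upwards [condExp_add_const_ae_eq hm hf c,
    condExp_mono (hf.add (integrable_const c)) hg hfg] with ω hadd hmono
  exact hadd ▸ hmono

end MeasureTheory

theorem shortfall_acceptance_h_longevity_general
    {Ω : Type*} {m0 : MeasurableSpace Ω} (P : Measure Ω) [IsProbabilityMeasure P]
    (T : ℝ) (ℱ : Filtration ℝ m0)
    (U : ℝ → ℝ → ℝ) (B : ℝ → ℝ → ℝ)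
    (hdec : ∀ t u v : ℝ, 0 ≤ t → t ≤ u → u ≤ v → v ≤ T →
      ∀ x : ℝ, U v x - B t v ≤ U u x - B t u)
    (t u v : ℝ) (h0t : 0 ≤ t) (htu : t ≤ u) (huv : u ≤ v) (hvT : v ≤ T)
    (X : Ω → ℝ)
    (hint_u : Integrable (fun ω => U u (X ω)) P)
    (hint_v : Integrable (fun ω => U v (X ω)) P)
    (hacc_v : ∀ᵐ ω ∂P, B t v ≤ (P[fun ω' => U v (X ω') | ℱ t]) ω) :
    ∀ᵐ ω ∂P, B t u ≤ (P[fun ω' => U u (X ω') | ℱ t]) ω := by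
  have hshift : ∀ᵐ ω ∂P, U v (X ω) + (B t u - B t v) ≤ U u (X ω) :=
    .of_forall fun ω => by linarith [hdec t u v h0t htu huv hvT (X ω)]
  filter_upwards [hacc_v, condExp_add_const_le_condExp (ℱ.le t) hint_v hint_u hshift]
    with ω hv hle
  linarith

/-- H-longevity of the fully-dynamic shortfall risk measure, at the level of
acceptance sets: if the family `(U_u - B_{tu})` is non-increasing in the horizon
`u`, then `𝒜^{U,B}_{tv} ∩ L^p(𝓕_u) ⊆ 𝒜^{U,B}_{tu}`, i.e. for `𝓕_u`-measurable
`X ∈ L^p`, `E[U_v(X)|𝓕_t] ≥ B_{tv}` a.s. implies `E[U_u(X)|𝓕_t] ≥ B_{tu}` a.s. -/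
theorem shortfall_acceptance_h_longevity
    {Ω : Type*} {m0 : MeasurableSpace Ω} (P : Measure Ω) [IsProbabilityMeasure P]
    (T : ℝ) (ℱ : Filtration ℝ m0) (p : ℝ≥0∞)
    (U : ℝ → ℝ → ℝ) (B : ℝ → ℝ → ℝ)
    (hU_mono : ∀ u : ℝ, Monotone (U u))
    (hU_conc : ∀ u : ℝ, ConcaveOn ℝ Set.univ (U u))
    (hdec : ∀ t u v : ℝ, 0 ≤ t → t ≤ u → u ≤ v → v ≤ T →
      ∀ x : ℝ, U v x - B t v ≤ U u x - B t u)
    (t u v : ℝ) (h0t : 0 ≤ t) (htu : t ≤ u) (huv : u ≤ v) (hvT : v ≤ T)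
    (X : Ω → ℝ) (hX_meas : StronglyMeasurable[ℱ u] X) (hX : MemLp X p P)
    (hint_u : Integrable (fun ω => U u (X ω)) P)
    (hint_v : Integrable (fun ω => U v (X ω)) P)
    (hacc_v : ∀ᵐ ω ∂P, B t v ≤ (P[fun ω' => U v (X ω') | ℱ t]) ω) :
    ∀ᵐ ω ∂P, B t u ≤ (P[fun ω' => U u (X ω') | ℱ t]) ω :=
  shortfall_acceptance_h_longevity_general P T ℱ U B hdec t u v h0t htu huv hvT X hint_u hint_v
    hacc_v
end

section
/- Let (ρ_{tu})_{0≤t≤u≤T} be a family of maps ρ_{tu} : L^p(𝓕_u) → L^p(𝓕_t). For an 𝓕_t-measurable m_t ∈ L^p(𝓕_t), define the acceptance set at level m_t by 𝒜^{ρ,m_t}_{tu} = { Y ∈ L^p(𝓕_u) : ρ_{tu}(Y) ≤ m_t a.s. }. Then h-longevity (for all 0 ≤ t ≤ u ≤ v ≤ T and all X ∈ L^p(𝓕_u), ρ_{tu}(X) ≤ ρ_{tv}(X) a.s.) holds if and only if for all 0 ≤ t ≤ u ≤ v ≤ T and all m_t ∈ L^p(𝓕_t), 𝒜^{ρ,m_t}_{tv}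 ∩ L^p(𝓕_u) ⊆ 𝒜^{ρ,m_t}_{tu}. -/
open MeasureTheory Real
open scoped ENNReal

/-- `f` belongs to `L^p(m)`: it is in `L^p` and strongly measurable with respect
to the sub-σ-algebra `m`. -/
def LpMeas' {Ω : Type*} {m0 : MeasurableSpace Ω} (P : Measure Ω) (p : ℝ≥0∞)
    (m : MeasurableSpace Ω) (f : Ω → ℝ) : Prop :=
  MemLp f p P ∧ StronglyMeasurable[m] f

theorem LpMeas'.mono {Ω : Type*} {m0 : MeasurableSpace Ω} {P : Measure Ω} {p : ℝ≥0∞}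
    {m m' : MeasurableSpace Ω} {f : Ω → ℝ} (hf : LpMeas' P p m f) (hm : m ≤ m') :
    LpMeas' P p m' f :=
  ⟨hf.1, hf.2.mono hm⟩

theorem h_longevity_iff_acceptance_inclusion_general
    {Ω : Type*} {m0 : MeasurableSpace Ω} (P : Measure Ω)
    (T : ℝ) (ℱ : Filtration ℝ m0) (p : ℝ≥0∞)
    (ρ : ℝ → ℝ → (Ω → ℝ) → (Ω → ℝ))
    (hρ_into : ∀ t u : ℝ, 0 ≤ t → t ≤ u → u ≤ T →
      ∀ X : Ω → ℝ, LpMeas' P p (ℱ u) X → LpMeas' P p (ℱ t) (ρ t u X)) :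
    (∀ t u v : ℝ, 0 ≤ t → t ≤ u → u ≤ v → v ≤ T →
      ∀ X : Ω → ℝ, LpMeas' P p (ℱ u) X →
        ∀ᵐ ω ∂P, ρ t u X ω ≤ ρ t v X ω)
    ↔ (∀ t u v : ℝ, 0 ≤ t → t ≤ u → u ≤ v → v ≤ T →
      ∀ mt : Ω → ℝ, LpMeas' P p (ℱ t) mt →
        ∀ X : Ω → ℝ, LpMeas' P p (ℱ u) X →
          (∀ᵐ ω ∂P, ρ t v X ω ≤ mt ω) → (∀ᵐ ω ∂P, ρ t u X ω ≤ mt ω)) := by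
  constructor
  · intro h_longevity t u v ht htu huv hvT mt _ X hX h_accept_v
    exact Filter.EventuallyLE.trans (h_longevity t u v ht htu huv hvT X hX) h_accept_v
  · intro h_inclusion t u v ht htu huv hvT X hX
    -- `X` is accepted at time `v` at its own level `ρ_{tv}(X)`, which lies in `L^p(𝓕_t)`.
    have h_level : LpMeas' P p (ℱ t) (ρ t v X) :=
      hρ_into t v ht (htu.trans huv) hvT X (hX.mono (ℱ.mono huv))
    exact h_inclusion t u v ht htu huv hvT (ρ t v X) h_level X hX Filter.EventuallyLE.rfl

/-- For a family of maps `ρ_{tu} : L^p(𝓕_u) → L^p(𝓕_t)`, h-longevity holds if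
and only if the acceptance sets at every level `m_t ∈ L^p(𝓕_t)` satisfy
`𝒜^{ρ,m_t}_{tv} ∩ L^p(𝓕_u) ⊆ 𝒜^{ρ,m_t}_{tu}` for all `t ≤ u ≤ v`. -/
theorem h_longevity_iff_acceptance_inclusion
    {Ω : Type*} {m0 : MeasurableSpace Ω} (P : Measure Ω) [IsProbabilityMeasure P]
    (T : ℝ) (ℱ : Filtration ℝ m0) (p : ℝ≥0∞)
    (ρ : ℝ → ℝ → (Ω → ℝ) → (Ω → ℝ))
    (hρ_into : ∀ t u : ℝ, 0 ≤ t → t ≤ u → u ≤ T →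
      ∀ X : Ω → ℝ, LpMeas' P p (ℱ u) X → LpMeas' P p (ℱ t) (ρ t u X)) :
    (∀ t u v : ℝ, 0 ≤ t → t ≤ u → u ≤ v → v ≤ T →
      ∀ X : Ω → ℝ, LpMeas' P p (ℱ u) X →
        ∀ᵐ ω ∂P, ρ t u X ω ≤ ρ t v X ω)
    ↔ (∀ t u v : ℝ, 0 ≤ t → t ≤ u → u ≤ v → v ≤ T →
      ∀ mt : Ω → ℝ, LpMeas' P p (ℱ t) mt →
        ∀ X : Ω → ℝ, LpMeas' P p (ℱ u) X →
          (∀ᵐ ω ∂P, ρ t v X ω ≤ mt ω) → (∀ᵐ ω ∂P, ρ t u X ω ≤ mt ω)) :=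
  h_longevity_iff_acceptance_inclusion_general P T ℱ p ρ hρ_into
end

section
/- Let Ũ : ℝ → ℝ be a strictly increasing, continuous, concave bijection of ℝ, let U : ℝ → ℝ be non-decreasing and concave, f : ℝ × ℝ → ℝ, and B ∈ ℝ. Assume the compatibility identity U(f(y,m)) − B = Ũ(y) − Ũ(−m) holds for all y, m ∈ ℝ. Then the certainty equivalent risk measure coincides with the generalized shortfall: for every X ∈ L^p with Ũ(X) integrable, inf{ m ∈ ℝ : E[U(f(X,m))] ≥ B } = − Ũ^{−1}( E[Ũ(X)] ). -/
open MeasureTheory Real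
open scoped ENNReal

/-! Substituting the compatibility identity, `E[U(f(X,m))] - B = E[Ũ(X)] - Ũ(-m)`, so the
acceptance set `{m | E[U(f(X,m))] ≥ B}` is `{m | Ũ(-m) ≤ E[Ũ(X)]}`, which by strict
monotonicity is the half-line `[-Ũ⁻¹(E[Ũ(X)]), ∞)`. -/

theorem StrictMono.le_invFun_iff {α β : Type*} [LinearOrder α] [Nonempty α] [Preorder β]
    {g : α → β} (hg : StrictMono g) (hsurj : Function.Surjective g) (x : α) (c : β) :
    g x ≤ c ↔ x ≤ Function.invFun g c := by
  conv_lhs => rw [← Function.rightInverse_invFun hsurj c]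
  exact hg.le_iff_le

theorem integral_add_const_of_eq {Ω : Type*} [MeasurableSpace Ω] {P : Measure Ω}
    [IsProbabilityMeasure P] {g h : Ω → ℝ} (hg : Integrable g P) (k : ℝ)
    (hgh : ∀ ω, h ω = g ω + k) :
    ∫ ω, h ω ∂P = ∫ ω, g ω ∂P + k := by
  simp only [hgh, integral_add hg (integrable_const k), integral_const, probReal_univ, one_smul]

theorem certaintyEquivalent_eq_generalizedShortfall_general
    {Ω : Type*} [MeasurableSpace Ω] (P : Measure Ω) [IsProbabilityMeasure P]
    (Ut : ℝ → ℝ) (hUt_mono : StrictMono Ut)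
    (hUt_bij : Function.Bijective Ut)
    (U : ℝ → ℝ)
    (f : ℝ → ℝ → ℝ) (B : ℝ)
    (hcompat : ∀ y m : ℝ, U (f y m) - B = Ut y - Ut (-m))
    (X : Ω → ℝ)
    (hXint : Integrable (fun ω => Ut (X ω)) P) :
    sInf {m : ℝ | B ≤ ∫ ω, U (f (X ω) m) ∂P} =
      -(Function.invFun Ut (∫ ω, Ut (X ω) ∂P)) := by
  have hacceptance : {m : ℝ | B ≤ ∫ ω, U (f (X ω) m) ∂P} =
      Set.Ici (-Function.invFun Ut (∫ ω, Ut (X ω) ∂P)) := by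
    ext m
    have hexpect : ∫ ω, U (f (X ω) m) ∂P = ∫ ω, Ut (X ω) ∂P + (B - Ut (-m)) :=
      integral_add_const_of_eq hXint _ fun ω => by linarith [hcompat (X ω) m]
    rw [Set.mem_ofPred_eq, Set.mem_Ici, hexpect, neg_le,
      ← hUt_mono.le_invFun_iff hUt_bij.surjective]
    constructor <;> intro h <;> linarith
  rw [hacceptance, csInf_Ici]

/-- The certainty equivalent risk measure coincides with the generalized
shortfall under the compatibility identity `U(f(y,m)) - B = Ũ(y) - Ũ(-m)`:
`inf{m : E[U(f(X,m))] ≥ B} = -Ũ⁻¹(E[Ũ(X)])`. -/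
theorem certaintyEquivalent_eq_generalizedShortfall
    {Ω : Type*} [MeasurableSpace Ω] (P : Measure Ω) [IsProbabilityMeasure P]
    (p : ℝ≥0∞)
    (Ut : ℝ → ℝ) (hUt_mono : StrictMono Ut) (hUt_cont : Continuous Ut)
    (hUt_conc : ConcaveOn ℝ Set.univ Ut) (hUt_bij : Function.Bijective Ut)
    (U : ℝ → ℝ) (hU_mono : Monotone U) (hU_conc : ConcaveOn ℝ Set.univ U)
    (f : ℝ → ℝ → ℝ) (B : ℝ)
    (hcompat : ∀ y m : ℝ, U (f y m) - B = Ut y - Ut (-m))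
    (X : Ω → ℝ) (hX : MemLp X p P)
    (hXint : Integrable (fun ω => Ut (X ω)) P) :
    sInf {m : ℝ | B ≤ ∫ ω, U (f (X ω) m) ∂P} =
      -(Function.invFun Ut (∫ ω, Ut (X ω) ∂P)) :=
  certaintyEquivalent_eq_generalizedShortfall_general P Ut hUt_mono hUt_bij U f B hcompat X hXint
end

section
/- Let a : [0,T] → [0,∞) be integrable, and for 0 ≤ t ≤ u ≤ T define U_u(x) = 1 − exp(−x + ∫_0^u a(s) ds) and B_{tu} = 1 − exp(∫_0^t a(s) ds). Then for every 𝓕_u-measurable X with e^{−X} integrable and every bounded 𝓕_t-measurable random variable m_t, the following are equivalent almost surely: E[U_u(X + m_t) | 𝓕_t] ≥ B_{tu}, and m_t ≥ ln E[ exp(−X + ∫_t^u a(s) ds) | 𝓕_t ]. In particular, the fully-dynamic shortfall risk measure associated with (U_u, B_{tu}) equals the h-entropic risk measure ρ^h_{tu}(X) = ln E[ exp(−X + ∫_t^u a(s) ds) | 𝓕_t ]. -/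
open MeasureTheory Real
open scoped ENNReal

/-!
Splitting `∫₀ᵘ a = ∫₀ᵗ a + ∫ₜᵘ a`, the utility becomes `1 - f * g` with
`f = exp (-mₜ + ∫₀ᵗ a)` and `g = exp (-X + ∫ₜᵘ a)`. The factor `f` is bounded and
`𝓕ₜ`-measurable, so it pulls out of the conditional expectation and the acceptability condition
reads `exp (-mₜ) * E[g | 𝓕ₜ] ≤ 1`. As `g > 0`, `E[g | 𝓕ₜ] > 0` a.s.,
and taking logarithms gives the h-entropic condition.
-/

theorem integral_add_adjacent_intervals_of_le {f : ℝ → ℝ} {T t u : ℝ}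
    (hf : IntervalIntegrable f volume 0 T) (h0t : 0 ≤ t) (htu : t ≤ u) (huT : u ≤ T) :
    ∫ s in (0:ℝ)..u, f s = (∫ s in (0:ℝ)..t, f s) + ∫ s in t..u, f s := by
  have h0T : 0 ≤ T := h0t.trans (htu.trans huT)
  refine (intervalIntegral.integral_add_adjacent_intervals (hf.mono_set ?_) (hf.mono_set ?_)).symm
  · rw [Set.uIcc_of_le h0t, Set.uIcc_of_le h0T]
    exact Set.Icc_subset_Icc le_rfl (htu.trans huT)
  · rw [Set.uIcc_of_le htu, Set.uIcc_of_le h0T]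
    exact Set.Icc_subset_Icc h0t huT

section

variable {Ω : Type*} {m m0 : MeasurableSpace Ω} {μ : Measure Ω}

theorem MemLp.exp_of_top {f : Ω → ℝ} (hf : MemLp f ∞ μ) : MemLp (fun ω => exp (f ω)) ∞ μ := by
  have hbdd : eLpNormEssSup f μ < ∞ := by simpa only [eLpNorm_exponent_top] using hf.2
  obtain ⟨C, hC⟩ := eLpNormEssSup_lt_top_iff_isBoundedUnder.mp hbdd
  refine memLp_top_of_bound (continuous_exp.comp_aestronglyMeasurable hf.1) (exp C) ?_
  filter_upwards [hC] with ω (hω : ‖f ω‖₊ ≤ C)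
  rw [norm_of_nonneg (exp_pos _).le, exp_le_exp]
  exact (le_abs_self _).trans (by exact_mod_cast hω)

theorem condExp_pos_of_pos [IsFiniteMeasure μ] (hm : m ≤ m0) {g : Ω → ℝ} (hg : Integrable g μ)
    (hpos : ∀ᵐ ω ∂μ, 0 < g ω) : ∀ᵐ ω ∂μ, 0 < μ[g | m] ω := by
  set s := {ω | μ[g | m] ω ≤ 0}
  have hs : MeasurableSet[m] s :=
    stronglyMeasurable_condExp.measurable (measurableSet_Iic (a := (0 : ℝ)))
  have hgs_nonpos : ∫ ω in s, g ω ∂μ ≤ 0 := by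
    rw [← setIntegral_condExp hm hg hs]
    exact setIntegral_nonpos (hm _ hs) fun ω hω => hω
  have hgs_zero : g =ᵐ[μ.restrict s] 0 := by
    refine (setIntegral_eq_zero_iff_of_nonneg_ae ?_ hg.integrableOn).mp
      (le_antisymm hgs_nonpos (setIntegral_nonneg_of_ae_restrict ?_))
    all_goals exact (ae_restrict_of_ae hpos).mono fun ω hω => hω.le
  have hμs : μ s = 0 := by
    rw [← Measure.restrict_eq_zero, ← ae_eq_bot, ← Filter.eventually_false_iff_eq_bot]
    filter_upwards [hgs_zero, ae_restrict_of_ae hpos] with ω h0 hpos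
    exact hpos.ne' h0
  filter_upwards [measure_eq_zero_iff_ae_notMem.mp hμs] with ω hω
  exact not_le.mp hω

theorem condExp_const_sub_mul_of_stronglyMeasurable_left [IsFiniteMeasure μ] (hm : m ≤ m0)
    {f g : Ω → ℝ} (hf : StronglyMeasurable[m] f) (hfg : Integrable (f * g) μ)
    (hg : Integrable g μ) (c : ℝ) :
    μ[fun ω => c - f ω * g ω | m] =ᵐ[μ] fun ω => c - f ω * μ[g | m] ω := by
  filter_upwards [condExp_sub (integrable_const c) hfg m,
    condExp_mul_of_stronglyMeasurable_left hf hfg hg] with ω hsub hmul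
  simp only [Pi.sub_def, Pi.mul_def] at hsub hmul
  rw [hsub, hmul, condExp_const hm]

end

theorem one_sub_exp_le_one_sub_exp_mul_iff {c m y : ℝ} (hy : 0 < y) :
    1 - exp c ≤ 1 - exp (-m + c) * y ↔ log y ≤ m := by
  rw [sub_le_sub_iff_left, log_le_iff_le_exp hy, exp_add, exp_neg, mul_right_comm,
    mul_le_iff_le_one_left (exp_pos c), inv_mul_le_iff₀ (exp_pos m), mul_one]

theorem shortfall_is_h_entropic_general
    {Ω : Type*} {m0 : MeasurableSpace Ω} (P : Measure Ω) [IsProbabilityMeasure P]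
    (T : ℝ) (ℱ : Filtration ℝ m0)
    (t u : ℝ) (h0t : 0 ≤ t) (htu : t ≤ u) (huT : u ≤ T)
    (a : ℝ → ℝ)
    (ha_int : IntervalIntegrable a MeasureTheory.volume 0 T)
    (X : Ω → ℝ)
    (hX_int : Integrable (fun ω => Real.exp (-X ω)) P)
    (mt : Ω → ℝ) (hmt_meas : StronglyMeasurable[ℱ t] mt)
    (hmt_bdd : MemLp mt ⊤ P) :
    ∀ᵐ ω ∂P,
      (1 - Real.exp (∫ s in (0:ℝ)..t, a s)
          ≤ (P[fun ω' => 1 - Real.exp (-(X ω' + mt ω') + ∫ s in (0:ℝ)..u, a s) | ℱ t]) ω)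
        ↔ (Real.log ((P[fun ω' => Real.exp (-X ω' + ∫ s in t..u, a s) | ℱ t]) ω)
            ≤ mt ω) := by
  have hsplit := integral_add_adjacent_intervals_of_le ha_int h0t htu huT
  set c₁ := ∫ s in (0:ℝ)..t, a s
  set c₂ := ∫ s in t..u, a s
  set f : Ω → ℝ := fun ω => exp (-mt ω + c₁)
  set g : Ω → ℝ := fun ω => exp (-X ω + c₂)
  have hf : StronglyMeasurable[ℱ t] f :=
    continuous_exp.comp_stronglyMeasurable (hmt_meas.neg.add_const c₁)
  have hg : Integrable g P := by simpa only [g, exp_add] using hX_int.mul_const (exp c₂)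
  have hfg : Integrable (f * g) P :=
    hg.mul_of_top_right (MemLp.exp_of_top (hmt_bdd.neg.add (memLp_top_const c₁)))
  have hU : (fun ω => 1 - exp (-(X ω + mt ω) + ∫ s in (0:ℝ)..u, a s)) =
      fun ω => 1 - f ω * g ω := by
    funext ω
    rw [hsplit, ← exp_add]
    ring_nf
  filter_upwards [condExp_const_sub_mul_of_stronglyMeasurable_left (ℱ.le t) hf hfg hg 1,
    condExp_pos_of_pos (ℱ.le t) hg (ae_of_all _ fun ω => exp_pos _)] with ω hcond hpos
  rw [hU, hcond]
  exact one_sub_exp_le_one_sub_exp_mul_iff hpos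

/-- The fully-dynamic shortfall risk measure with utility
`U_u(x) = 1 - exp(-x + ∫_0^u a(s) ds)` and target `B_{tu} = 1 - exp(∫_0^t a(s) ds)`
equals the h-entropic risk measure: the acceptability condition
`E[U_u(X + m_t) | 𝓕_t] ≥ B_{tu}` is a.s. equivalent to
`m_t ≥ ln E[exp(-X + ∫_t^u a(s) ds) | 𝓕_t]`. -/
theorem shortfall_is_h_entropic
    {Ω : Type*} {m0 : MeasurableSpace Ω} (P : Measure Ω) [IsProbabilityMeasure P]
    (T : ℝ) (ℱ : Filtration ℝ m0)
    (t u : ℝ) (h0t : 0 ≤ t) (htu : t ≤ u) (huT : u ≤ T)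
    (a : ℝ → ℝ) (ha_nonneg : ∀ s, 0 ≤ a s)
    (ha_int : IntervalIntegrable a MeasureTheory.volume 0 T)
    (X : Ω → ℝ) (hX_meas : StronglyMeasurable[ℱ u] X)
    (hX_int : Integrable (fun ω => Real.exp (-X ω)) P)
    (mt : Ω → ℝ) (hmt_meas : StronglyMeasurable[ℱ t] mt)
    (hmt_bdd : MemLp mt ⊤ P) :
    ∀ᵐ ω ∂P,
      (1 - Real.exp (∫ s in (0:ℝ)..t, a s)
          ≤ (P[fun ω' => 1 - Real.exp (-(X ω' + mt ω') + ∫ s in (0:ℝ)..u, a s) | ℱ t]) ω)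
        ↔ (Real.log ((P[fun ω' => Real.exp (-X ω' + ∫ s in t..u, a s) | ℱ t]) ω)
            ≤ mt ω) :=
  shortfall_is_h_entropic_general P T ℱ t u h0t htu huT a ha_int X hX_int mt hmt_meas hmt_bdd
end
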